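/- arXiv:2109.05754 — 13 statements merged into one kernel-verified Lean document; each statement's English description precedes it below -/
import Mathlib

section
/- Consider the controlled SIR model. The following are equivalent: (i) for every admissible controlled trajectory (S, I, β) with (S(t0), I(t0)) ∈ G_Π one has (S(t), I(t)) ∈ G_Π for all t ≥ t0 (i.e. the maximal robust positively invariant set equals G_Π); (ii) β_max (1 − I_max) ≤ γ. -/
/-- The constraint set `G_Π` for the SIR model:
`{(S, I) : S ≥ 0, I ≥ 0, S + I ≤ 1, I ≤ I_max}`. -/
def GPiSIR (Imax : ℝ) : Set (ℝ × ℝ) :=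
  {p | 0 ≤ p.1 ∧ 0 ≤ p.2 ∧ p.1 + p.2 ≤ 1 ∧ p.2 ≤ Imax}

/-!
If `β_max (1 - I_max) ≤ γ`, then along an admissible trajectory `S` and `I` stay nonnegative
(each solves a linear equation with locally bounded coefficient, so by Grönwall it cannot change
sign) and `S + I` decreases. Hence `I > I_max` forces `β S < β_max (1 - I_max) ≤ γ`, i.e. `I' ≤ 0`,
so `I` never crosses `I_max`.

If `β_max (1 - I_max) > γ`, take `β ≡ β_max` and start at the corner `(1 - I_max, I_max)` of
`G_Π`: there `I' > 0`, so the trajectory leaves `G_Π` at once. This trajectory exists for all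
times: truncating `S` and `I` to `[0, 1]` makes the SIR field bounded and globally Lipschitz,
so Picard–Lindelöf yields a global solution, and that solution never leaves the triangle
`S, I ≥ 0, S + I ≤ 1`, on which the truncation does nothing.
-/

open Set Filter Topology NNReal

theorem nonneg_of_abs_deriv_le_mul_abs {f f' : ℝ → ℝ} {K a b : ℝ} (hab : a ≤ b)
    (hf : ∀ t ∈ Icc a b, HasDerivAt f (f' t) t) (bound : ∀ t ∈ Icc a b, |f' t| ≤ K * |f t|)
    (ha : 0 ≤ f a) : 0 ≤ f b := by
  by_contra! hb
  have hcont : ContinuousOn f (Icc a b) := HasDerivAt.continuousOn hf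
  obtain ⟨c, hc, hfc⟩ := intermediate_value_Icc' hab hcont ⟨hb.le, ha⟩
  have hsub : Icc c b ⊆ Icc a b := Icc_subset_Icc_left hc.1
  have hzero := eq_zero_of_abs_deriv_le_mul_abs_self_of_eq_zero_right (hcont.mono hsub)
    (fun t ht ↦ (hf t (hsub (Ico_subset_Icc_self ht))).hasDerivWithinAt) hfc
    (fun t ht ↦ bound t (hsub (Ico_subset_Icc_self ht))) b ⟨hc.2, le_rfl⟩
  exact hb.ne hzero

theorem le_of_hasDerivAt_nonpos_of_lt {f f' : ℝ → ℝ} {a b c : ℝ} (hab : a ≤ b)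
    (hf : ∀ t ∈ Icc a b, HasDerivAt f (f' t) t) (hf' : ∀ t ∈ Icc a b, c < f t → f' t ≤ 0)
    (ha : f a ≤ c) : f b ≤ c := by
  have hcont : ContinuousOn f (Icc a b) := HasDerivAt.continuousOn hf
  set A := Icc a b ∩ f ⁻¹' Iic c
  have hA : IsCompact A := isCompact_Icc.of_isClosed_subset
    (hcont.preimage_isClosed_of_isClosed isClosed_Icc isClosed_Iic) inter_subset_left
  have hsA : sSup A ∈ A := hA.sSup_mem ⟨a, ⟨le_rfl, hab⟩, ha⟩
  obtain ⟨⟨has, hsb⟩, hfs⟩ := hsA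
  have habove : ∀ t ∈ Ioc (sSup A) b, c < f t := fun t ht ↦ by
    by_contra! hft
    exact ht.1.not_ge (le_csSup hA.bddAbove ⟨⟨has.trans ht.1.le, ht.2⟩, hft⟩)
  have hsub : Icc (sSup A) b ⊆ Icc a b := Icc_subset_Icc_left has
  have hanti : AntitoneOn f (Icc (sSup A) b) := by
    refine antitoneOn_of_hasDerivWithinAt_nonpos (f' := f') (convex_Icc _ _) (hcont.mono hsub)
      (fun t ht ↦ ?_) (fun t ht ↦ ?_) <;> rw [interior_Icc] at ht
    · exact (hf t (hsub (Ioo_subset_Icc_self ht))).hasDerivWithinAt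
    · exact hf' t (hsub (Ioo_subset_Icc_self ht)) (habove t (Ioo_subset_Ioc_self ht))
  exact (hanti ⟨le_rfl, hsb⟩ ⟨hsb, le_rfl⟩ hsb).trans hfs

theorem exists_gt_of_hasDerivAt_pos {f : ℝ → ℝ} {f' a : ℝ} (hf : HasDerivAt f f' a)
    (hf' : 0 < f') : ∃ b, a < b ∧ f a < f b := by
  have hslope := (hasDerivAt_iff_tendsto_slope.mp hf).mono_left (nhdsGT_le_nhdsNE a)
  obtain ⟨b, hb, hab⟩ := ((hslope.eventually (eventually_gt_nhds hf')).and
    self_mem_nhdsWithin).exists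
  exact ⟨b, hab, (slope_pos_iff_of_le (le_of_lt hab)).mp hb⟩

section GlobalExistence

variable {E : Type*} [NormedAddCommGroup E] [NormedSpace ℝ E] [CompleteSpace E] {f : E → E}
  {K L : ℝ≥0}

theorem exists_forall_hasDerivAt_Ioo_of_lipschitzWith (hf : LipschitzWith K f)
    (hL : ∀ x, ‖f x‖ ≤ L) (t₀ : ℝ) (x₀ : E) (n : ℕ) :
    ∃ α : ℝ → E, α t₀ = x₀ ∧ ∀ t ∈ Ioo (t₀ - n) (t₀ + n), HasDerivAt α (f (α t)) t := by
  have hPL : IsPicardLindelof (fun _ ↦ f) (tmin := t₀ - n) (tmax := t₀ + n)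
      ⟨t₀, by simp⟩ x₀ (L * n) 0 L K :=
    { lipschitzOnWith := fun _ _ ↦ hf.lipschitzOnWith
      continuousOn := fun _ _ ↦ continuousOn_const
      norm_le := fun _ _ x _ ↦ hL x
      mul_max_le := by simp }
  obtain ⟨α, hα₀, hα⟩ := hPL.exists_eq_forall_mem_Icc_hasDerivWithinAt₀
  exact ⟨α, hα₀, fun t ht ↦
    (hα t (Ioo_subset_Icc_self ht)).hasDerivAt (Icc_mem_nhds ht.1 ht.2)⟩

theorem exists_forall_hasDerivAt_of_lipschitzWith (hf : LipschitzWith K f)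
    (hL : ∀ x, ‖f x‖ ≤ L) (t₀ : ℝ) (x₀ : E) :
    ∃ x : ℝ → E, x t₀ = x₀ ∧ ∀ t, HasDerivAt x (f (x t)) t := by
  choose α hα₀ hα using exists_forall_hasDerivAt_Ioo_of_lipschitzWith hf hL t₀ x₀
  have hagree : ∀ m n : ℕ, ∀ t, |t - t₀| < m → |t - t₀| < n → α m t = α n t := by
    intro m n t hm hn
    have hk : |t - t₀| < min (m : ℝ) n := lt_min hm hn
    have hsub : ∀ s ∈ Ioo (t₀ - min (m : ℝ) n) (t₀ + min (m : ℝ) n),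
        s ∈ Ioo (t₀ - m) (t₀ + m) ∧ s ∈ Ioo (t₀ - n) (t₀ + n) := fun s ⟨h₁, h₂⟩ ↦ by
      have := min_le_left (m : ℝ) n
      have := min_le_right (m : ℝ) n
      exact ⟨⟨by linarith, by linarith⟩, ⟨by linarith, by linarith⟩⟩
    refine ODE_solution_unique_of_mem_Ioo (v := fun _ ↦ f) (s := fun _ ↦ univ)
      (fun _ _ ↦ hf.lipschitzOnWith) ?_ (fun s hs ↦ ⟨hα m s (hsub s hs).1, trivial⟩)
      (fun s hs ↦ ⟨hα n s (hsub s hs).2, trivial⟩) ((hα₀ m).trans (hα₀ n).symm) ?_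
    · constructor <;> linarith [abs_nonneg (t - t₀)]
    · constructor <;> linarith [abs_lt.mp hk]
  let N : ℝ → ℕ := fun t ↦ ⌊|t - t₀|⌋₊ + 1
  have hN : ∀ t, |t - t₀| < N t := fun t ↦ by
    simpa [N] using Nat.lt_floor_add_one |t - t₀|
  refine ⟨fun t ↦ α (N t) t, by simp [N, hα₀], fun t ↦ ?_⟩
  have hev : (fun s ↦ α (N s) s) =ᶠ[𝓝 t] α (N t) := by
    filter_upwards [(continuous_abs.comp (continuous_sub_right t₀)).isOpen_preimage _
      isOpen_Iio |>.mem_nhds (hN t)] with s hs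
    exact hagree _ _ s (hN s) hs
  refine (hα (N t) t ?_).congr_of_eventuallyEq hev
  constructor <;> linarith [abs_lt.mp (hN t)]

end GlobalExistence

noncomputable def clampUnit (x : ℝ) : ℝ := projIcc 0 1 zero_le_one x

theorem lipschitzWith_clampUnit : LipschitzWith 1 clampUnit := by
  have h := (LipschitzWith.subtype_val (Icc (0 : ℝ) 1)).comp (LipschitzWith.projIcc zero_le_one)
  rw [mul_one] at h
  exact h

theorem clampUnit_mem (x : ℝ) : clampUnit x ∈ Icc 0 1 := (projIcc 0 1 zero_le_one x).2

theorem clampUnit_of_nonpos {x : ℝ} (hx : x ≤ 0) : clampUnit x = 0 := by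
  simp [clampUnit, projIcc_of_le_left _ hx]

theorem clampUnit_of_mem {x : ℝ} (hx : x ∈ Icc 0 1) : clampUnit x = x := by
  simp [clampUnit, projIcc_of_mem _ hx]

noncomputable def sirTruncatedField (β γ : ℝ) (p : ℝ × ℝ) : ℝ × ℝ :=
  (-(β * clampUnit p.1 * clampUnit p.2), β * clampUnit p.1 * clampUnit p.2 - γ * clampUnit p.2)

theorem lipschitzWith_sirTruncatedField (β γ : ℝ) :
    LipschitzWith (2 * ‖β‖₊ + ‖γ‖₊) (sirTruncatedField β γ) := by
  refine LipschitzWith.of_dist_le_mul fun p q ↦ ?_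
  have hc : ∀ x y, |clampUnit x - clampUnit y| ≤ |x - y| := fun x y ↦ by
    simpa [Real.dist_eq] using lipschitzWith_clampUnit.dist_le_mul x y
  have hb : ∀ x, |clampUnit x| ≤ 1 := fun x ↦
    abs_le.mpr ⟨by linarith [(clampUnit_mem x).1], (clampUnit_mem x).2⟩
  have h₁ : |p.1 - q.1| ≤ dist p q := by rw [Prod.dist_eq, ← Real.dist_eq]; exact le_max_left _ _
  have h₂ : |p.2 - q.2| ≤ dist p q := by rw [Prod.dist_eq, ← Real.dist_eq]; exact le_max_right _ _
  have hprod : |clampUnit p.1 * clampUnit p.2 - clampUnit q.1 * clampUnit q.2| ≤ 2 * dist p q :=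
    calc _ = |clampUnit p.1 * (clampUnit p.2 - clampUnit q.2)
            + clampUnit q.2 * (clampUnit p.1 - clampUnit q.1)| := by ring_nf
      _ ≤ 1 * |p.2 - q.2| + 1 * |p.1 - q.1| := by
        refine (abs_add_le _ _).trans (add_le_add ?_ ?_) <;> rw [abs_mul] <;>
          exact mul_le_mul (hb _) (hc _ _) (abs_nonneg _) zero_le_one
      _ ≤ 2 * dist p q := by linarith
  have hγ : |γ * clampUnit p.2 - γ * clampUnit q.2| ≤ |γ| * dist p q := by
    rw [← mul_sub, abs_mul]; exact mul_le_mul_of_nonneg_left ((hc _ _).trans h₂) (abs_nonneg _)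
  have hβ : |β * (clampUnit p.1 * clampUnit p.2 - clampUnit q.1 * clampUnit q.2)|
      ≤ |β| * (2 * dist p q) := by
    rw [abs_mul]; exact mul_le_mul_of_nonneg_left hprod (abs_nonneg _)
  rw [Prod.dist_eq]
  simp only [sirTruncatedField, Real.dist_eq, NNReal.coe_add, NNReal.coe_mul,
    NNReal.coe_ofNat, coe_nnnorm, Real.norm_eq_abs]
  refine max_le ?_ ?_
  · calc _ = |β * (clampUnit p.1 * clampUnit p.2 - clampUnit q.1 * clampUnit q.2)| := by
          rw [← abs_neg]; ring_nf
      _ ≤ _ := by nlinarith [abs_nonneg γ, dist_nonneg (x := p) (y := q)]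
  · calc _ ≤ |β * (clampUnit p.1 * clampUnit p.2 - clampUnit q.1 * clampUnit q.2)|
          + |γ * clampUnit p.2 - γ * clampUnit q.2| := by
          refine (abs_sub _ _).trans_eq' ?_; ring_nf
      _ ≤ _ := by nlinarith

theorem norm_sirTruncatedField_le (β γ : ℝ) (p : ℝ × ℝ) :
    ‖sirTruncatedField β γ p‖ ≤ (2 * ‖β‖₊ + ‖γ‖₊ : ℝ≥0) := by
  obtain ⟨h₁, h₁'⟩ := clampUnit_mem p.1
  obtain ⟨h₂, h₂'⟩ := clampUnit_mem p.2
  have hβ : |β * clampUnit p.1 * clampUnit p.2| ≤ |β| := by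
    rw [abs_mul, abs_mul, abs_of_nonneg h₁, abs_of_nonneg h₂]
    nlinarith [abs_nonneg β, mul_le_one₀ h₁' h₂ h₂']
  have hγ : |γ * clampUnit p.2| ≤ |γ| := by
    rw [abs_mul, abs_of_nonneg h₂]; nlinarith [abs_nonneg γ]
  simp only [sirTruncatedField, Prod.norm_def, Real.norm_eq_abs, NNReal.coe_add, NNReal.coe_mul,
    NNReal.coe_ofNat, coe_nnnorm, abs_neg]
  refine max_le ?_ ((abs_sub _ _).trans ?_) <;> linarith [abs_nonneg β, abs_nonneg γ]

section SIR

variable {γ βmin βmax t₀ : ℝ} {S I β : ℝ → ℝ}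

theorem sir_nonneg (hβ : ∀ t, t₀ ≤ t → β t ∈ Icc βmin βmax)
    (hS : ∀ t, t₀ ≤ t → HasDerivAt S (-(β t * S t * I t)) t)
    (hI : ∀ t, t₀ ≤ t → HasDerivAt I (β t * S t * I t - γ * I t) t)
    (hS₀ : 0 ≤ S t₀) (hI₀ : 0 ≤ I t₀) {t : ℝ} (ht : t₀ ≤ t) : 0 ≤ S t ∧ 0 ≤ I t := by
  set B := max |βmin| |βmax|
  have hβB : ∀ s ∈ Icc t₀ t, |β s| ≤ B := fun s hs ↦
    abs_le_max_abs_abs (hβ s hs.1).1 (hβ s hs.1).2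
  obtain ⟨CS, hCS⟩ := isCompact_Icc.exists_bound_of_continuousOn
    (HasDerivAt.continuousOn fun s (hs : s ∈ Icc t₀ t) ↦ hS s hs.1)
  obtain ⟨CI, hCI⟩ := isCompact_Icc.exists_bound_of_continuousOn
    (HasDerivAt.continuousOn fun s (hs : s ∈ Icc t₀ t) ↦ hI s hs.1)
  constructor
  · refine nonneg_of_abs_deriv_le_mul_abs (K := B * CI) ht (fun s hs ↦ hS s hs.1)
      (fun s hs ↦ ?_) hS₀
    calc |-(β s * S s * I s)| = |β s| * |I s| * |S s| := by
          rw [abs_neg, abs_mul, abs_mul]; ring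
      _ ≤ B * CI * |S s| := by
          gcongr
          exacts [hβB s hs, hCI s hs]
  · refine nonneg_of_abs_deriv_le_mul_abs (K := B * CS + |γ|) ht (fun s hs ↦ hI s hs.1)
      (fun s hs ↦ ?_) hI₀
    calc |β s * S s * I s - γ * I s| = |β s * S s - γ| * |I s| := by
          rw [← abs_mul]; ring_nf
      _ ≤ (B * CS + |γ|) * |I s| := by
          gcongr
          refine (abs_sub _ _).trans ?_
          rw [abs_mul]
          gcongr
          exacts [hβB s hs, hCS s hs]

theorem sir_mem_GPiSIR {Imax : ℝ} (hγ : 0 ≤ γ) (hcond : βmax * (1 - Imax) ≤ γ)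
    (hβ : ∀ t, t₀ ≤ t → β t ∈ Icc βmin βmax)
    (hS : ∀ t, t₀ ≤ t → HasDerivAt S (-(β t * S t * I t)) t)
    (hI : ∀ t, t₀ ≤ t → HasDerivAt I (β t * S t * I t - γ * I t) t)
    (h₀ : (S t₀, I t₀) ∈ GPiSIR Imax) {t : ℝ} (ht : t₀ ≤ t) : (S t, I t) ∈ GPiSIR Imax := by
  obtain ⟨hS₀, hI₀, hsum₀, hImax₀⟩ := h₀
  have hnn : ∀ s, t₀ ≤ s → 0 ≤ S s ∧ 0 ≤ I s := fun s hs ↦ sir_nonneg hβ hS hI hS₀ hI₀ hs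
  have hsum : ∀ s, t₀ ≤ s → S s + I s ≤ 1 := fun s hs ↦
    le_of_hasDerivAt_nonpos_of_lt (f := S + I) hs (fun r hr ↦ (hS r hr.1).add (hI r hr.1))
      (fun r hr _ ↦ by linarith [mul_nonneg hγ (hnn r hr.1).2]) hsum₀
  have hImax : I t ≤ Imax := by
    refine le_of_hasDerivAt_nonpos_of_lt ht (fun r hr ↦ hI r hr.1) (fun r hr hr' ↦ ?_) hImax₀
    obtain ⟨hSr, hIr⟩ := hnn r hr.1
    have hSlt : S r ≤ 1 - Imax := by linarith [hsum r hr.1]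
    have hβS : β r * S r ≤ γ := by
      rcases le_total (β r) 0 with hβr | hβr
      · nlinarith [mul_nonpos_of_nonpos_of_nonneg hβr hSr]
      · have hβmax : 0 ≤ βmax := hβr.trans (hβ r hr.1).2
        nlinarith [mul_le_mul_of_nonneg_right (hβ r hr.1).2 hSr,
          mul_le_mul_of_nonneg_left hSlt hβmax]
    nlinarith [mul_le_mul_of_nonneg_right hβS hIr]
  exact ⟨(hnn t ht).1, (hnn t ht).2, hsum t ht, hImax⟩

end SIR

theorem exists_sir_trajectory (β : ℝ) {γ : ℝ} (hγ : 0 ≤ γ) (t₀ : ℝ) {S₀ I₀ : ℝ}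
    (hS₀ : 0 ≤ S₀) (hI₀ : 0 ≤ I₀) (hsum₀ : S₀ + I₀ ≤ 1) :
    ∃ S I : ℝ → ℝ, Differentiable ℝ S ∧ Differentiable ℝ I ∧ S t₀ = S₀ ∧ I t₀ = I₀ ∧
      (∀ t, t₀ ≤ t → HasDerivAt S (-(β * S t * I t)) t) ∧
      (∀ t, t₀ ≤ t → HasDerivAt I (β * S t * I t - γ * I t) t) := by
  obtain ⟨p, hp₀, hp⟩ := exists_forall_hasDerivAt_of_lipschitzWith
    (lipschitzWith_sirTruncatedField β γ) (norm_sirTruncatedField_le β γ) t₀ (S₀, I₀)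
  have hS : ∀ t, HasDerivAt (fun s ↦ (p s).1)
      (-(β * clampUnit (p t).1 * clampUnit (p t).2)) t := fun t ↦
    (hasFDerivAt_fst (𝕜 := ℝ) (p := p t)).comp_hasDerivAt t (hp t)
  have hI : ∀ t, HasDerivAt (fun s ↦ (p s).2)
      (β * clampUnit (p t).1 * clampUnit (p t).2 - γ * clampUnit (p t).2) t := fun t ↦
    (hasFDerivAt_snd (𝕜 := ℝ) (p := p t)).comp_hasDerivAt t (hp t)
  -- The truncation vanishes on negative coordinates, so neither coordinate can leave `[0, ∞)`.
  have hSnn : ∀ t, t₀ ≤ t → 0 ≤ (p t).1 := fun t ht ↦ by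
    have := le_of_hasDerivAt_nonpos_of_lt (f := fun s ↦ -(p s).1) (c := 0) ht
      (fun s _ ↦ (hS s).neg)
      (fun s _ hs ↦ by rw [clampUnit_of_nonpos (x := (p s).1) (by linarith)]; simp)
      (by simp [hp₀, hS₀])
    linarith
  have hInn : ∀ t, t₀ ≤ t → 0 ≤ (p t).2 := fun t ht ↦ by
    have := le_of_hasDerivAt_nonpos_of_lt (f := fun s ↦ -(p s).2) (c := 0) ht
      (fun s _ ↦ (hI s).neg)
      (fun s _ hs ↦ by rw [clampUnit_of_nonpos (x := (p s).2) (by linarith)]; simp)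
      (by simp [hp₀, hI₀])
    linarith
  have hsum : ∀ t, t₀ ≤ t → (p t).1 + (p t).2 ≤ 1 := fun t ht ↦
    le_of_hasDerivAt_nonpos_of_lt (f := fun s ↦ (p s).1 + (p s).2) ht
      (fun s _ ↦ (hS s).add (hI s))
      (fun s _ _ ↦ by linarith [mul_nonneg hγ (clampUnit_mem (p s).2).1]) (by simpa [hp₀])
  have hclamp : ∀ t, t₀ ≤ t → clampUnit (p t).1 = (p t).1 ∧ clampUnit (p t).2 = (p t).2 :=
    fun t ht ↦ ⟨clampUnit_of_mem ⟨hSnn t ht, by linarith [hInn t ht, hsum t ht]⟩,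
      clampUnit_of_mem ⟨hInn t ht, by linarith [hSnn t ht, hsum t ht]⟩⟩
  refine ⟨fun s ↦ (p s).1, fun s ↦ (p s).2, fun t ↦ (hS t).differentiableAt,
    fun t ↦ (hI t).differentiableAt, by simp [hp₀], by simp [hp₀], fun t ht ↦ ?_, fun t ht ↦ ?_⟩
  · simpa only [hclamp t ht] using hS t
  · simpa only [hclamp t ht] using hI t

theorem sir_mrpi_eq_GPi_iff_general
    (γ βmin βmax Imax t0 : ℝ)
    (hγ : 0 < γ) (hβ : βmin ≤ βmax)
    (hI0 : 0 < Imax) (hI1 : Imax < 1) :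
    (∀ S I β : ℝ → ℝ,
        Differentiable ℝ S → Differentiable ℝ I →
        (∀ t, t0 ≤ t → β t ∈ Set.Icc βmin βmax) →
        (∀ t, t0 ≤ t → HasDerivAt S (-(β t * S t * I t)) t) →
        (∀ t, t0 ≤ t → HasDerivAt I (β t * S t * I t - γ * I t) t) →
        (S t0, I t0) ∈ GPiSIR Imax →
        ∀ t, t0 ≤ t → (S t, I t) ∈ GPiSIR Imax)
      ↔ βmax * (1 - Imax) ≤ γ := by
  refine ⟨fun hinv ↦ ?_, fun hcond S I β _ _ hβt hS hI h₀ t ht ↦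
    sir_mem_GPiSIR hγ.le hcond hβt hS hI h₀ ht⟩
  by_contra! hlt
  obtain ⟨S, I, hSd, hId, hS₀, hI₀, hS, hI⟩ :=
    exists_sir_trajectory βmax hγ.le t0 (sub_nonneg.mpr hI1.le) hI0.le (by linarith)
  have hstart : (S t0, I t0) ∈ GPiSIR Imax := by
    rw [hS₀, hI₀]; exact ⟨by linarith, hI0.le, by linarith, le_rfl⟩
  have hgrowth : 0 < βmax * S t0 * I t0 - γ * I t0 := by rw [hS₀, hI₀]; nlinarith
  obtain ⟨t, ht, hIt⟩ := exists_gt_of_hasDerivAt_pos (hI t0 le_rfl) hgrowth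
  have hmem := hinv S I (fun _ ↦ βmax) hSd hId (fun _ _ ↦ ⟨hβ, le_rfl⟩) hS hI hstart t ht.le
  exact hmem.2.2.2.not_gt (hI₀ ▸ hIt)

/-- The MRPI of the controlled SIR model equals `G_Π` iff `β_max (1 − I_max) ≤ γ`. -/
theorem sir_mrpi_eq_GPi_iff
    (γ βmin βmax Imax t0 : ℝ)
    (hγ : 0 < γ) (hβmin : 0 < βmin) (hβ : βmin ≤ βmax)
    (hI0 : 0 < Imax) (hI1 : Imax < 1) :
    (∀ S I β : ℝ → ℝ,
        Differentiable ℝ S → Differentiable ℝ I →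
        (∀ t, t0 ≤ t → β t ∈ Set.Icc βmin βmax) →
        (∀ t, t0 ≤ t → HasDerivAt S (-(β t * S t * I t)) t) →
        (∀ t, t0 ≤ t → HasDerivAt I (β t * S t * I t - γ * I t) t) →
        (S t0, I t0) ∈ GPiSIR Imax →
        ∀ t, t0 ≤ t → (S t, I t) ∈ GPiSIR Imax)
      ↔ βmax * (1 - Imax) ≤ γ :=
  sir_mrpi_eq_GPi_iff_general γ βmin βmax Imax t0 hγ hβ hI0 hI1
end

section
/- Consider the controlled SIR model. The following are equivalent: (i) for every point (S0, I0) ∈ G_Π there exists an admissible controlled trajectory (S, I, β) with (S(t0), I(t0)) = (S0, I0) and (S(t), I(t)) ∈ G_Π for all t ≥ t0 (i.e. the admissible set equals G_Π); (ii) β_min (1 − I_max) ≤ γ. -/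
/-!
Necessity: started at the corner `(1 - I_max, I_max)`, the infective fraction is maximal at `t0`,
so `I'(t0) = I_max (β(t0) (1 - I_max) - γ) ≤ 0`, whence `β_min (1 - I_max) ≤ γ`.

Sufficiency, with the constant control `β_min`: off the axes, `S + I - (γ / β_min) log S` is a
first integral, so in the coordinate `x = log S` the orbit is a graph `I = φ(x)` and the dynamics
reduce to the scalar equation `x' = -β_min φ(x)`. Since `φ` vanishes at some `a < log S0` and
has slope at most `γ / β_min`, the solution decreases towards `a` without reaching it in finite
time, so it exists for all times. Along it `S + I` decreases and `I` stays
below `max(I0, S0 + I0 - γ / β_min)`, which the condition bounds by `I_max`.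
-/

open Set Real Filter

lemma HasDerivAt.nonpos_of_isMaxOn_Ici {f : ℝ → ℝ} {f' a : ℝ} (hf : HasDerivAt f f' a)
    (h : IsMaxOn f (Ici a) a) : f' ≤ 0 :=
  le_of_tendsto hf.tendsto_slope_zero_right <| eventually_nhdsWithin_of_forall fun _ ht =>
    smul_nonpos_of_nonneg_of_nonpos (inv_nonneg.2 (le_of_lt ht))
      (sub_nonpos.2 (h (mem_Ici.2 (le_add_of_nonneg_right (le_of_lt ht)))))

lemma surjective_of_hasDerivAt_ge {f f' : ℝ → ℝ} {c : ℝ} (hc : 0 < c)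
    (hf : ∀ x, HasDerivAt f (f' x) x) (hf' : ∀ x, c ≤ f' x) : Function.Surjective f := by
  have hmono : Monotone fun x => f x - c * x :=
    monotone_of_hasDerivAt_nonneg (fun x => ((hf x).sub ((hasDerivAt_id x).const_mul c)))
      (fun x => by simpa using hf' x)
  refine (continuous_iff_continuousAt.2 fun x => (hf x).continuousAt).surjective ?_ ?_
  · refine (tendsto_atTop_add_left_of_le' (f := fun x => f x - c * x) _ (f 0 - c * 0) ?_
      (tendsto_id.const_mul_atTop hc)).congr fun x => by simp
    filter_upwards [eventually_ge_atTop 0] with x hx using hmono hx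
  · refine (tendsto_atBot_add_left_of_ge' (f := fun x => f x - c * x) _ (f 0 - c * 0) ?_
      (tendsto_id.const_mul_atBot hc)).congr fun x => by simp
    filter_upwards [eventually_le_atBot 0] with x hx using hmono hx

theorem exists_monotone_hasDerivAt_of_pos_of_le {H : ℝ → ℝ} {M : ℝ} (hH : Continuous H)
    (hpos : ∀ y, 0 < H y) (hle : ∀ y, H y ≤ M) (t0 y0 : ℝ) :
    ∃ Y : ℝ → ℝ, Y t0 = y0 ∧ Monotone Y ∧ ∀ t, HasDerivAt Y (H (Y t)) t := by
  -- `Y` inverts the time `T y = ∫ u in y0..y, (H u)⁻¹` needed to travel from `y0` to `y`.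
  set T : ℝ → ℝ := fun y => ∫ u in y0..y, (H u)⁻¹
  have hT : ∀ y, HasDerivAt T (H y)⁻¹ y := fun y =>
    ((hH.inv₀ fun u => (hpos u).ne').integral_hasStrictDerivAt y0 y).hasDerivAt
  have hM : 0 < M⁻¹ := inv_pos.2 ((hpos 0).trans_le (hle 0))
  let e : ℝ ≃o ℝ := StrictMono.orderIsoOfSurjective T
    (strictMono_of_hasDerivAt_pos hT fun y => inv_pos.2 (hpos y))
    (surjective_of_hasDerivAt_ge hM hT fun y => inv_anti₀ (hpos y) (hle y))
  have he : ∀ s, HasDerivAt e.symm (H (e.symm s)) s := fun s => by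
    simpa using (hT (e.symm s)).of_local_left_inverse e.symm.continuous.continuousAt
      (inv_ne_zero (hpos _).ne') (Eventually.of_forall e.apply_symm_apply)
  refine ⟨fun t => e.symm (t - t0), ?_, e.symm.monotone.comp fun _ _ h => by simpa using h,
    fun t => (he (t - t0)).comp_sub_const t t0⟩
  simp only [sub_self]
  exact e.symm_apply_eq.2 (by simp [e, T])

theorem exists_antitone_hasDerivAt_neg_of_le_mul_sub {G : ℝ → ℝ} {a M x0 : ℝ}
    (hG : ContinuousOn G (Ioi a)) (hpos : ∀ x, a < x → 0 < G x)
    (hle : ∀ x, a < x → G x ≤ M * (x - a)) (hx0 : a < x0) (t0 : ℝ) :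
    ∃ X : ℝ → ℝ, X t0 = x0 ∧ Antitone X ∧ (∀ t, a < X t) ∧ ∀ t, HasDerivAt X (-G (X t)) t := by
  have hmem : ∀ y, a < a + exp (-y) := fun y => lt_add_of_pos_right a (exp_pos _)
  -- In the coordinate `y = -log (x - a)` the speed is positive and bounded by `M`.
  set H : ℝ → ℝ := fun y => G (a + exp (-y)) * exp y
  have hH : Continuous H := (hG.comp_continuous (by fun_prop) hmem).mul continuous_exp
  have hHpos : ∀ y, 0 < H y := fun y => mul_pos (hpos _ (hmem y)) (exp_pos y)
  have hHle : ∀ y, H y ≤ M := fun y => by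
    calc H y ≤ M * (a + exp (-y) - a) * exp y :=
          mul_le_mul_of_nonneg_right (hle _ (hmem y)) (exp_pos y).le
      _ = M := by rw [add_sub_cancel_left, mul_assoc, ← exp_add, neg_add_cancel, exp_zero, mul_one]
  obtain ⟨Y, hY0, hYmono, hY⟩ :=
    exists_monotone_hasDerivAt_of_pos_of_le hH hHpos hHle t0 (-log (x0 - a))
  refine ⟨fun t => a + exp (-Y t), ?_, fun s t hst => ?_, fun t => hmem (Y t), fun t => ?_⟩
  · simp [hY0, exp_log (sub_pos.2 hx0)]
  · simpa using hYmono hst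
  · refine ((hY t).neg.exp.const_add a).congr_deriv ?_
    simp only [H]
    rw [mul_neg, ← mul_assoc, mul_comm (exp _), mul_assoc, ← exp_add, Pi.neg_apply,
      neg_add_cancel, exp_zero, mul_one]

lemma exists_lt_le_zero_forall_Ioc_pos {f : ℝ → ℝ} {x1 x0 : ℝ} (hf : Continuous f)
    (hx : x1 ≤ x0) (h1 : f x1 ≤ 0) (h0 : 0 < f x0) :
    ∃ a < x0, f a ≤ 0 ∧ ∀ x ∈ Ioc a x0, 0 < f x := by
  set s := Iic x0 ∩ f ⁻¹' Iic 0
  have hbdd : BddAbove s := bddAbove_Iic.mono inter_subset_left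
  have ha : sSup s ∈ s :=
    (isClosed_Iic.inter (isClosed_Iic.preimage hf)).csSup_mem ⟨x1, hx, h1⟩ hbdd
  refine ⟨sSup s, ha.1.lt_of_ne fun h => h0.not_ge (h ▸ ha.2), ha.2, fun x hx => ?_⟩
  by_contra! hfx
  exact hx.1.not_ge (le_csSup hbdd ⟨hx.2, hfx⟩)

/-- The infective fraction on the orbit through `(S0, I0)` of the SIR system with constant
contact rate `b`, as a function of `x = log S`: the orbit is a level set of the first integral
`S + I - (γ / b) log S`. -/
noncomputable def sirOrbit (b γ S0 I0 x : ℝ) : ℝ := S0 + I0 - exp x + γ / b * (x - log S0)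

section SIROrbit

variable {b γ S0 I0 : ℝ}

lemma hasDerivAt_sirOrbit (x : ℝ) : HasDerivAt (sirOrbit b γ S0 I0) (γ / b - exp x) x := by
  refine ((((hasDerivAt_exp x).const_sub (S0 + I0)).add
    (((hasDerivAt_id' x).sub_const (log S0)).const_mul (γ / b)))).congr_deriv ?_
  ring

lemma differentiable_sirOrbit : Differentiable ℝ (sirOrbit b γ S0 I0) :=
  fun x => (hasDerivAt_sirOrbit x).differentiableAt

lemma sirOrbit_log (hS0 : 0 < S0) : sirOrbit b γ S0 I0 (log S0) = I0 := by
  simp [sirOrbit, exp_log hS0]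

lemma sirOrbit_le_add_mul_sub {x y : ℝ} (hyx : y ≤ x) :
    sirOrbit b γ S0 I0 x ≤ sirOrbit b γ S0 I0 y + γ / b * (x - y) := by
  have := exp_le_exp.2 hyx
  simp only [sirOrbit]
  linarith

lemma sirOrbit_lt_zero (hb : 0 < b) (hγ : 0 < γ) :
    sirOrbit b γ S0 I0 (log S0 - b * (S0 + I0) / γ) < 0 := by
  have : γ / b * (b * (S0 + I0) / γ) = S0 + I0 := by field_simp
  have := exp_pos (log S0 - b * (S0 + I0) / γ)
  simp only [sirOrbit]
  linarith

lemma exp_add_sirOrbit_le (hb : 0 ≤ b) (hγ : 0 ≤ γ) {x : ℝ} (hx : x ≤ log S0) :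
    exp x + sirOrbit b γ S0 I0 x ≤ S0 + I0 := by
  have : γ / b * (x - log S0) ≤ 0 :=
    mul_nonpos_of_nonneg_of_nonpos (div_nonneg hγ hb) (sub_nonpos.2 hx)
  simp only [sirOrbit]
  linarith

lemma sirOrbit_le_max (hb : 0 ≤ b) (hγ : 0 ≤ γ) (hS0 : 0 < S0) {x : ℝ} (hx : x ≤ log S0) :
    sirOrbit b γ S0 I0 x ≤ max I0 (S0 + I0 - γ / b) := by
  set u := exp x / S0
  have hu0 : 0 ≤ u := by positivity
  have hu1 : u ≤ 1 := (div_le_one hS0).2 (by simpa [exp_log hS0] using exp_le_exp.2 hx)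
  have hlog : x - log S0 ≤ u - 1 := by
    simpa [u, log_div (exp_pos x).ne' hS0.ne'] using log_le_sub_one_of_pos (by positivity : 0 < u)
  -- Bounding `log` by its tangent at `1` makes the bound affine in `u = S / S0 ∈ [0, 1]`.
  calc sirOrbit b γ S0 I0 x ≤ S0 + I0 - exp x + γ / b * (u - 1) :=
        add_le_add_right (mul_le_mul_of_nonneg_left hlog (div_nonneg hγ hb)) _
    _ = u * I0 + (1 - u) * (S0 + I0 - γ / b) := by simp only [u]; field_simp; ring
    _ ≤ u * max I0 (S0 + I0 - γ / b) + (1 - u) * max I0 (S0 + I0 - γ / b) := by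
        gcongr
        · exact le_max_left _ _
        · exact le_max_right _ _
    _ = max I0 (S0 + I0 - γ / b) := by ring

lemma exists_hasDerivAt_neg_mul_sirOrbit (hb : 0 < b) (hγ : 0 < γ) (hS0 : 0 < S0) (hI0 : 0 < I0)
    (t0 : ℝ) :
    ∃ x : ℝ → ℝ, Differentiable ℝ x ∧ x t0 = log S0 ∧
      ∀ t, t0 ≤ t → x t ≤ log S0 ∧ 0 < sirOrbit b γ S0 I0 (x t) ∧
        HasDerivAt x (-(b * sirOrbit b γ S0 I0 (x t))) t := by
  set φ := sirOrbit b γ S0 I0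
  obtain ⟨a, hax0, hφa, hφpos⟩ := exists_lt_le_zero_forall_Ioc_pos
    differentiable_sirOrbit.continuous (sub_le_self _ (by positivity))
    (sirOrbit_lt_zero hb hγ).le (hI0.trans_eq (sirOrbit_log hS0).symm)
  -- Freezing `φ` to the right of `log S0` changes nothing forward in time.
  set G : ℝ → ℝ := fun x => b * φ (min x (log S0))
  have hmin : ∀ x, a < x → min x (log S0) ∈ Ioc a (log S0) := fun x hx =>
    ⟨lt_min hx hax0, min_le_right _ _⟩
  have hGle : ∀ x, a < x → G x ≤ γ * (x - a) := fun x hx => by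
    have := sirOrbit_le_add_mul_sub (b := b) (γ := γ) (S0 := S0) (I0 := I0) (hmin x hx).1.le
    calc G x ≤ b * (γ / b * (min x (log S0) - a)) :=
          mul_le_mul_of_nonneg_left (by linarith) hb.le
      _ ≤ γ * (x - a) := by
          rw [← mul_assoc, mul_div_cancel₀ _ hb.ne']; gcongr; exact min_le_left _ _
  have hG : Continuous G := continuous_const.mul
    (differentiable_sirOrbit.continuous.comp (continuous_id.min continuous_const))
  obtain ⟨X, hX0, hXanti, haX, hX⟩ := exists_antitone_hasDerivAt_neg_of_le_mul_sub
    hG.continuousOn (fun x hx => mul_pos hb (hφpos _ (hmin x hx))) hGle hax0 t0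
  refine ⟨X, fun t => (hX t).differentiableAt, hX0, fun t ht => ?_⟩
  have hXle : X t ≤ log S0 := hX0 ▸ hXanti ht
  have hGX : G (X t) = b * φ (X t) := by simp only [G, min_eq_left hXle]
  exact ⟨hXle, hφpos _ ⟨haX t, hXle⟩, hGX ▸ hX t⟩

end SIROrbit

def IsAdmissibleSIRTrajectory (γ βmin βmax Imax t0 S0 I0 : ℝ) (S I β : ℝ → ℝ) : Prop :=
  Differentiable ℝ S ∧ Differentiable ℝ I ∧
    (∀ t, t0 ≤ t → β t ∈ Icc βmin βmax) ∧
    (∀ t, t0 ≤ t → HasDerivAt S (-(β t * S t * I t)) t) ∧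
    (∀ t, t0 ≤ t → HasDerivAt I (β t * S t * I t - γ * I t) t) ∧
    S t0 = S0 ∧ I t0 = I0 ∧
    (∀ t, t0 ≤ t → (S t, I t) ∈ GPiSIR Imax)

section Admissible

variable {γ βmin βmax Imax t0 S0 I0 : ℝ}

lemma IsAdmissibleSIRTrajectory.mul_one_sub_le {S I β : ℝ → ℝ}
    (h : IsAdmissibleSIRTrajectory γ βmin βmax Imax t0 (1 - Imax) Imax S I β)
    (hI0 : 0 < Imax) (hI1 : Imax ≤ 1) : βmin * (1 - Imax) ≤ γ := by
  obtain ⟨-, -, hβ, -, hI, hS0, hI0', hG⟩ := h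
  have hmax : IsMaxOn I (Ici t0) t0 := fun t ht => hI0' ▸ (hG t ht).2.2.2
  have hderiv := (hI t0 le_rfl).nonpos_of_isMaxOn_Ici hmax
  rw [hS0, hI0'] at hderiv
  have hβt0 : βmin * (1 - Imax) ≤ β t0 * (1 - Imax) :=
    mul_le_mul_of_nonneg_right (hβ t0 le_rfl).1 (sub_nonneg.2 hI1)
  nlinarith

lemma exists_isAdmissibleSIRTrajectory_of_infected_eq_zero (hβ : βmin ≤ βmax)
    (hp : (S0, 0) ∈ GPiSIR Imax) :
    ∃ S I β, IsAdmissibleSIRTrajectory γ βmin βmax Imax t0 S0 0 S I β :=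
  ⟨fun _ => S0, fun _ => 0, fun _ => βmin, differentiable_const _, differentiable_const _,
    fun _ _ => ⟨le_rfl, hβ⟩, fun t _ => by simpa using hasDerivAt_const t S0,
    fun t _ => by simpa using hasDerivAt_const t (0 : ℝ), rfl, rfl, fun _ _ => hp⟩

lemma exists_isAdmissibleSIRTrajectory_of_susceptible_eq_zero (hγ : 0 ≤ γ) (hβ : βmin ≤ βmax)
    (hp : (0, I0) ∈ GPiSIR Imax) :
    ∃ S I β, IsAdmissibleSIRTrajectory γ βmin βmax Imax t0 0 I0 S I β := by
  obtain ⟨-, hI0, hI1, hImax⟩ := hp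
  have hdecay : ∀ t, t0 ≤ t → exp (-γ * (t - t0)) ≤ 1 := fun t ht =>
    exp_le_one_iff.2 (mul_nonpos_of_nonpos_of_nonneg (neg_nonpos.2 hγ) (sub_nonneg.2 ht))
  refine ⟨fun _ => 0, fun t => I0 * exp (-γ * (t - t0)), fun _ => βmin, differentiable_const _,
    by fun_prop, fun _ _ => ⟨le_rfl, hβ⟩, fun t _ => by simpa using hasDerivAt_const t (0 : ℝ),
    fun t _ => ?_, rfl, by simp, fun t ht => ?_⟩
  · refine ((((hasDerivAt_id' t).sub_const t0).const_mul (-γ)).exp.const_mul I0).congr_deriv ?_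
    ring
  · have hIt : I0 * exp (-γ * (t - t0)) ≤ I0 := mul_le_of_le_one_right hI0 (hdecay t ht)
    exact ⟨le_rfl, by positivity, by simp only [zero_add]; linarith, hIt.trans hImax⟩

lemma exists_isAdmissibleSIRTrajectory_of_pos (hγ : 0 < γ) (hβmin : 0 < βmin)
    (hβ : βmin ≤ βmax) (hcond : βmin * (1 - Imax) ≤ γ) (hS0 : 0 < S0) (hI0 : 0 < I0)
    (hp : (S0, I0) ∈ GPiSIR Imax) :
    ∃ S I β, IsAdmissibleSIRTrajectory γ βmin βmax Imax t0 S0 I0 S I β := by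
  obtain ⟨-, -, hsum, hImax⟩ := hp
  obtain ⟨x, hxd, hx0, hx⟩ := exists_hasDerivAt_neg_mul_sirOrbit hβmin hγ hS0 hI0 t0
  have hpeak : S0 + I0 - γ / βmin ≤ Imax := by
    have : 1 - Imax ≤ γ / βmin := (le_div_iff₀ hβmin).2 (by linarith)
    linarith
  refine ⟨fun t => exp (x t), fun t => sirOrbit βmin γ S0 I0 (x t), fun _ => βmin, hxd.exp,
    differentiable_sirOrbit.comp hxd, fun _ _ => ⟨le_rfl, hβ⟩, fun t ht => ?_, fun t ht => ?_,
    by simp [hx0, exp_log hS0], by simp [hx0, sirOrbit_log hS0], fun t ht => ?_⟩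
  · exact (hx t ht).2.2.exp.congr_deriv (by ring)
  · refine ((hasDerivAt_sirOrbit (x t)).comp t (hx t ht).2.2).congr_deriv ?_
    field_simp
    ring
  · obtain ⟨hxt, hpos, -⟩ := hx t ht
    exact ⟨(exp_pos _).le, hpos.le, (exp_add_sirOrbit_le hβmin.le hγ.le hxt).trans hsum,
      (sirOrbit_le_max hβmin.le hγ.le hS0 hxt).trans (max_le hImax hpeak)⟩

end Admissible

/-- The admissible set of the controlled SIR model equals `G_Π` iff
`β_min (1 − I_max) ≤ γ`. -/
theorem sir_admissible_eq_GPi_iff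
    (γ βmin βmax Imax t0 : ℝ)
    (hγ : 0 < γ) (hβmin : 0 < βmin) (hβ : βmin ≤ βmax)
    (hI0 : 0 < Imax) (hI1 : Imax < 1) :
    (∀ S0 I0 : ℝ, (S0, I0) ∈ GPiSIR Imax →
        ∃ S I β : ℝ → ℝ,
          Differentiable ℝ S ∧ Differentiable ℝ I ∧
          (∀ t, t0 ≤ t → β t ∈ Set.Icc βmin βmax) ∧
          (∀ t, t0 ≤ t → HasDerivAt S (-(β t * S t * I t)) t) ∧
          (∀ t, t0 ≤ t → HasDerivAt I (β t * S t * I t - γ * I t) t) ∧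
          S t0 = S0 ∧ I t0 = I0 ∧
          (∀ t, t0 ≤ t → (S t, I t) ∈ GPiSIR Imax))
      ↔ βmin * (1 - Imax) ≤ γ := by
  change (∀ S0 I0 : ℝ, (S0, I0) ∈ GPiSIR Imax →
      ∃ S I β, IsAdmissibleSIRTrajectory γ βmin βmax Imax t0 S0 I0 S I β) ↔ _
  refine ⟨fun h => ?_, fun hcond S0 I0 hp => ?_⟩
  · obtain ⟨S, I, β, hSIβ⟩ := h (1 - Imax) Imax ⟨by linarith, hI0.le, by linarith, le_rfl⟩
    exact hSIβ.mul_one_sub_le hI0 hI1.le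
  rcases (show 0 ≤ I0 from hp.2.1).eq_or_lt with rfl | hI
  · exact exists_isAdmissibleSIRTrajectory_of_infected_eq_zero hβ hp
  rcases (show 0 ≤ S0 from hp.1).eq_or_lt with rfl | hS
  · exact exists_isAdmissibleSIRTrajectory_of_susceptible_eq_zero hγ.le hβ hp
  exact exists_isAdmissibleSIRTrajectory_of_pos hγ hβmin hβ hcond hS hI hp
end

section
/- Consider the closed-loop uncertain SIR model under the affine feedback β̂. The following are equivalent: (i) every uncertain trajectory (S, I, γ) with (S(t0), I(t0)) ∈ G_Π satisfies (S(t), I(t)) ∈ G_Π for all t ≥ t0 (i.e. the maximal robust positively invariant set of the closed-loop system equals G_Π); (ii) β_min (1 − I_max) ≤ γ_min. -/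
/-- The affine feedback `β̂(I) = β_min (I/I_max) + β_max (1 − I/I_max)`. -/
noncomputable def betaHat (βmin βmax Imax i : ℝ) : ℝ :=
  βmin * (i / Imax) + βmax * (1 - i / Imax)

/-!
Along a trajectory, `S` and `I` solve linear equations `f' = c(t) f` with `c` bounded above on
compact time intervals, so they stay nonnegative, and `(S + I)' = -γ I ≤ 0`. Where `I ≥ I_max` the
feedback gives `β̂(I) ≤ β_min` while `S ≤ 1 - I_max`, so `I' = (β̂(I) S - γ) I ≤ 0` as soon as
`β_min (1 - I_max) ≤ γ_min`; a barrier argument then keeps `I ≤ I_max`.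

Conversely, the trajectory with `γ ≡ γ_min` through the corner `(1 - I_max, I_max)` of `G_Π` has
`I'(t0) = I_max (β_min (1 - I_max) - γ_min)`, which must be `≤ 0` if it stays in `G_Π`. This
trajectory exists for all times because the SIR vector field precomposed with the projection onto the
unit square is bounded and globally Lipschitz, and its solutions starting in the simplex `GPiSIR 1`
stay there, where the projection does nothing.
-/

open Set Filter Topology Real
open scoped NNReal

theorem le_of_deriv_right_le_mul_sub {f f' : ℝ → ℝ} {a b c K : ℝ}
    (hf : ContinuousOn f (Icc a b)) (hf' : ∀ t ∈ Ico a b, HasDerivWithinAt f (f' t) (Ici t) t)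
    (ha : f a ≤ c) (bound : ∀ t ∈ Ico a b, c < f t → f' t ≤ K * (f t - c)) :
    ∀ ⦃t⦄, t ∈ Icc a b → f t ≤ c := by
  intro t ht
  refine le_of_forall_pos_le_add fun δ hδ ↦ ?_
  set L := |K| + 1
  have hB (s : ℝ) : HasDerivAt (fun s ↦ c + δ * exp (L * (s - b)))
      (L * (δ * exp (L * (s - b)))) s :=
    ((((hasDerivAt_id' s).sub_const b).const_mul L).exp.const_mul δ |>.const_add c).congr_deriv
      (by ring)
  have hle := image_le_of_deriv_right_lt_deriv_boundary hf hf' ?_ hB ?_ ht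
  · calc f t ≤ c + δ * exp (L * (t - b)) := hle
      _ ≤ c + δ := by
        gcongr
        exact mul_le_of_le_one_right hδ.le
          (exp_le_one_iff.2 (mul_nonpos_of_nonneg_of_nonpos (by positivity) (by linarith [ht.2])))
  · have := mul_pos hδ (exp_pos (L * (a - b)))
    linarith
  · intro s hs hfs
    have hpos : 0 < δ * exp (L * (s - b)) := mul_pos hδ (exp_pos _)
    have hgt : c < f s := by rw [hfs]; linarith
    calc f' s ≤ K * (f s - c) := bound s hs hgt
      _ ≤ |K| * (f s - c) := by gcongr; exact le_abs_self K
      _ < L * (δ * exp (L * (s - b))) := by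
        rw [hfs, add_sub_cancel_left]
        exact mul_lt_mul_of_pos_right (lt_add_one _) hpos

theorem nonneg_of_deriv_right_eq_mul {f c : ℝ → ℝ} {a b K : ℝ}
    (hf : ContinuousOn f (Icc a b))
    (hf' : ∀ t ∈ Ico a b, HasDerivWithinAt f (c t * f t) (Ici t) t)
    (hc : ∀ t ∈ Ico a b, c t ≤ K) (ha : 0 ≤ f a) :
    ∀ ⦃t⦄, t ∈ Icc a b → 0 ≤ f t := by
  intro t ht
  have := le_of_deriv_right_le_mul_sub (f := -f) (c := 0) (K := K) hf.neg
    (fun t ht ↦ (hf' t ht).neg) (by simpa using ha)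
    (fun t ht hpos ↦ by
      simp only [Pi.neg_apply, sub_zero] at hpos ⊢
      nlinarith [hc t ht]) ht
  simpa using this

theorem IsLocalMaxOn.hasDerivWithinAt_Ici_nonpos {f : ℝ → ℝ} {f' a : ℝ}
    (hmax : IsLocalMaxOn f (Ici a) a) (hf : HasDerivWithinAt f f' (Ici a) a) : f' ≤ 0 := by
  have h1 : (1 : ℝ) ∈ posTangentConeAt (Ici a) a :=
    one_mem_posTangentConeAt_iff_frequently.2
      (eventually_nhdsWithin_of_forall (s := Ioi a) fun _ hx ↦ mem_Ici.2 (le_of_lt hx)).frequently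
  simpa using hmax.hasFDerivWithinAt_nonpos hf.hasFDerivWithinAt h1

theorem exists_forall_hasDerivAt_of_lipschitzWith_s2 {E : Type*} [NormedAddCommGroup E]
    [NormedSpace ℝ E] [CompleteSpace E] {F : E → E} {K C : ℝ≥0} (hF : LipschitzWith K F)
    (hC : ∀ x, ‖F x‖ ≤ C) (t₀ : ℝ) (x₀ : E) :
    ∃ X : ℝ → E, X t₀ = x₀ ∧ ∀ t, HasDerivAt X (F (X t)) t := by
  have hloc (n : ℕ) : ∃ α : ℝ → E, α t₀ = x₀ ∧
      ∀ t ∈ Ioo (t₀ - (n + 1)) (t₀ + (n + 1)), HasDerivAt α (F (α t)) t := by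
    have hpl : IsPicardLindelof (fun _ ↦ F) (tmin := t₀ - (n + 1)) (tmax := t₀ + (n + 1))
        ⟨t₀, by constructor <;> linarith⟩ x₀ (C * (n + 1)) 0 C K :=
      .of_time_independent (fun x _ ↦ hC x) hF.lipschitzOnWith (by simp)
    obtain ⟨α, hα₀, hα⟩ := hpl.exists_eq_forall_mem_Icc_hasDerivWithinAt₀
    exact ⟨α, hα₀, fun t ht ↦ (hα t (Ioo_subset_Icc_self ht)).hasDerivAt (Icc_mem_nhds ht.1 ht.2)⟩
  choose α hα₀ hα using hloc
  have hagree (m n : ℕ) (hmn : m ≤ n) :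
      EqOn (α m) (α n) (Ioo (t₀ - (m + 1)) (t₀ + (m + 1))) := by
    have hmn' : (m : ℝ) ≤ n := by exact_mod_cast hmn
    have hsub : Ioo (t₀ - (m + 1)) (t₀ + (m + 1)) ⊆ Ioo (t₀ - (n + 1)) (t₀ + (n + 1)) :=
      Ioo_subset_Ioo (by linarith) (by linarith)
    exact ODE_solution_unique_of_mem_Ioo (v := fun _ ↦ F) (s := fun _ ↦ univ)
      (fun _ _ ↦ hF.lipschitzOnWith) ⟨by linarith, by linarith⟩
      (fun t ht ↦ ⟨hα m t ht, trivial⟩) (fun t ht ↦ ⟨hα n t (hsub ht), trivial⟩)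
      ((hα₀ m).trans (hα₀ n).symm)
  set N : ℝ → ℕ := fun t ↦ ⌈|t - t₀|⌉₊
  have hN (t : ℝ) : t ∈ Ioo (t₀ - (N t + 1)) (t₀ + (N t + 1)) := by
    have h := (abs_lt.1 ((Nat.le_ceil |t - t₀|).trans_lt (lt_add_one (N t : ℝ))))
    constructor <;> linarith [h.1, h.2]
  refine ⟨fun t ↦ α (N t) t, by simp [N, hα₀ 0], fun t ↦ ?_⟩
  refine (hα (N t) t (hN t)).congr_of_eventuallyEq ?_
  filter_upwards [Ioo_mem_nhds (hN t).1 (hN t).2] with s hs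
  rcases le_total (N s) (N t) with h | h
  · exact hagree _ _ h (hN s)
  · exact (hagree _ _ h hs).symm

noncomputable def projUnitSquare (p : ℝ × ℝ) : ℝ × ℝ :=
  (max 0 (min p.1 1), max 0 (min p.2 1))

lemma lipschitzWith_projUnitSquare : LipschitzWith 1 projUnitSquare := by
  have h := ((LipschitzWith.prod_fst.min_const 1).const_max 0).prodMk
    ((LipschitzWith.prod_snd.min_const 1).const_max 0)
  rw [max_self] at h
  exact h

lemma projUnitSquare_mem (p : ℝ × ℝ) : projUnitSquare p ∈ Icc 0 1 ×ˢ Icc 0 1 :=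
  ⟨⟨le_max_left _ _, max_le zero_le_one (min_le_right _ _)⟩,
    ⟨le_max_left _ _, max_le zero_le_one (min_le_right _ _)⟩⟩

lemma projUnitSquare_eq_self {p : ℝ × ℝ} (hp : p ∈ GPiSIR 1) : projUnitSquare p = p := by
  obtain ⟨h1, h2, h3, -⟩ := hp
  ext <;> simp only [projUnitSquare] <;>
    rw [min_eq_left (by linarith), max_eq_right (by assumption)]

noncomputable def sirField (βmin βmax γ Imax : ℝ) (p : ℝ × ℝ) : ℝ × ℝ :=
  (-(betaHat βmin βmax Imax p.2 * p.1 * p.2), betaHat βmin βmax Imax p.2 * p.1 * p.2 - γ * p.2)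

theorem exists_hasDerivAt_sirField_projUnitSquare (βmin βmax γ Imax t0 : ℝ) (x0 : ℝ × ℝ) :
    ∃ X : ℝ → ℝ × ℝ, X t0 = x0 ∧
      ∀ t, HasDerivAt X (sirField βmin βmax γ Imax (projUnitSquare (X t))) t := by
  have hsmooth : ContDiff ℝ 1 (sirField βmin βmax γ Imax) := by
    unfold sirField betaHat; fun_prop
  have hcpt : IsCompact (Icc (0 : ℝ) 1 ×ˢ Icc (0 : ℝ) 1) := isCompact_Icc.prod isCompact_Icc
  obtain ⟨K, hK⟩ := hsmooth.contDiffOn.exists_lipschitzOnWith one_ne_zero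
    ((convex_Icc 0 1).prod (convex_Icc 0 1)) hcpt
  obtain ⟨C, hC⟩ := hcpt.exists_bound_of_continuousOn hsmooth.continuous.continuousOn
  have hlip := hK.comp lipschitzWith_projUnitSquare.lipschitzOnWith (s := univ)
    (fun p _ ↦ projUnitSquare_mem p)
  exact exists_forall_hasDerivAt_of_lipschitzWith_s2 (lipschitzOnWith_univ.1 hlip)
    (C := C.toNNReal) (fun p ↦ (hC _ (projUnitSquare_mem p)).trans (le_coe_toNNReal C)) t0 x0

section SIR

variable {βmin βmax Imax : ℝ}

lemma betaHat_self (hI : Imax ≠ 0) : betaHat βmin βmax Imax Imax = βmin := by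
  simp [betaHat, div_self hI]

lemma betaHat_le_of_le (hβ : βmin ≤ βmax) (hI : 0 < Imax) {i : ℝ} (hi : Imax ≤ i) :
    betaHat βmin βmax Imax i ≤ βmin := by
  have : 1 ≤ i / Imax := (one_le_div hI).2 hi
  unfold betaHat
  nlinarith

lemma betaHat_mul_le_of_le (hβ : βmin ≤ βmax) (hI : 0 < Imax) {S i γ : ℝ}
    (hγ : βmin * (1 - Imax) ≤ γ) (hγ0 : 0 ≤ γ) (hS : 0 ≤ S) (hsum : S + i ≤ 1)
    (hi : Imax ≤ i) : betaHat βmin βmax Imax i * S ≤ γ := by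
  have hb := betaHat_le_of_le hβ hI hi
  rcases le_or_gt (betaHat βmin βmax Imax i) 0 with hneg | hpos <;> nlinarith

theorem sir_trajectory_mem_GPiSIR {γmin t0 : ℝ} (hβ : βmin ≤ βmax) (hγmin : 0 ≤ γmin)
    (hI0 : 0 < Imax) (hineq : βmin * (1 - Imax) ≤ γmin) {S I γ : ℝ → ℝ}
    (hγ : ∀ t, t0 ≤ t → γmin ≤ γ t)
    (hS : ∀ t, t0 ≤ t → HasDerivAt S (-(betaHat βmin βmax Imax (I t) * S t * I t)) t)
    (hI : ∀ t, t0 ≤ t →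
      HasDerivAt I (betaHat βmin βmax Imax (I t) * S t * I t - γ t * I t) t)
    (h0 : (S t0, I t0) ∈ GPiSIR Imax) :
    ∀ t, t0 ≤ t → (S t, I t) ∈ GPiSIR Imax := by
  obtain ⟨hS0, hI0', hsum0, hImax0⟩ := h0
  intro t1 ht1
  have hSc : ContinuousOn S (Icc t0 t1) := HasDerivAt.continuousOn fun t ht ↦ hS t ht.1
  have hIc : ContinuousOn I (Icc t0 t1) := HasDerivAt.continuousOn fun t ht ↦ hI t ht.1
  have hγ0 (t : ℝ) (ht : t ∈ Ico t0 t1) : 0 ≤ γ t := hγmin.trans (hγ t ht.1)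
  obtain ⟨KI, hKI⟩ := isCompact_Icc.bddAbove_image
    (f := fun t ↦ betaHat βmin βmax Imax (I t) * S t) (by unfold betaHat; fun_prop)
  obtain ⟨KS, hKS⟩ := isCompact_Icc.bddAbove_image
    (f := fun t ↦ -(betaHat βmin βmax Imax (I t) * I t)) (by unfold betaHat; fun_prop)
  have hInn : ∀ t ∈ Icc t0 t1, 0 ≤ I t :=
    nonneg_of_deriv_right_eq_mul (c := fun t ↦ betaHat βmin βmax Imax (I t) * S t - γ t) hIc
      (fun t ht ↦ (hI t ht.1).hasDerivWithinAt.congr_deriv (by ring))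
      (fun t ht ↦ by
        have := hKI (mem_image_of_mem _ (Ico_subset_Icc_self ht))
        linarith [hγ0 t ht]) hI0'
  have hSnn : ∀ t ∈ Icc t0 t1, 0 ≤ S t :=
    nonneg_of_deriv_right_eq_mul (c := fun t ↦ -(betaHat βmin βmax Imax (I t) * I t)) hSc
      (fun t ht ↦ (hS t ht.1).hasDerivWithinAt.congr_deriv (by ring))
      (fun t ht ↦ hKS (mem_image_of_mem _ (Ico_subset_Icc_self ht))) hS0
  have hsum : ∀ t ∈ Icc t0 t1, S t + I t ≤ 1 :=
    le_of_deriv_right_le_mul_sub (K := 0) (hSc.add hIc)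
      (fun t ht ↦ ((hS t ht.1).add (hI t ht.1)).hasDerivWithinAt) hsum0
      (fun t ht _ ↦ by nlinarith [hγ0 t ht, hInn t (Ico_subset_Icc_self ht)])
  have hImax : ∀ t ∈ Icc t0 t1, I t ≤ Imax :=
    le_of_deriv_right_le_mul_sub (K := 0) hIc (fun t ht ↦ (hI t ht.1).hasDerivWithinAt) hImax0
      (fun t ht hgt ↦ by
        have ht' := Ico_subset_Icc_self ht
        have := betaHat_mul_le_of_le hβ hI0 (hineq.trans (hγ t ht.1)) (hγ0 t ht) (hSnn t ht')
          (hsum t ht') hgt.le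
        nlinarith [hInn t ht'])
  have ht1' : t1 ∈ Icc t0 t1 := ⟨ht1, le_rfl⟩
  exact ⟨hSnn t1 ht1', hInn t1 ht1', hsum t1 ht1', hImax t1 ht1'⟩

theorem mem_GPiSIR_one_of_hasDerivAt_sirField_projUnitSquare {γ t0 : ℝ} (hγ : 0 ≤ γ)
    {X : ℝ → ℝ × ℝ}
    (hX : ∀ t, t0 ≤ t → HasDerivAt X (sirField βmin βmax γ Imax (projUnitSquare (X t))) t)
    (h0 : X t0 ∈ GPiSIR 1) : ∀ t, t0 ≤ t → X t ∈ GPiSIR 1 := by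
  obtain ⟨hS0, hI0, hsum0, -⟩ := h0
  intro t1 ht1
  set F := fun t ↦ sirField βmin βmax γ Imax (projUnitSquare (X t))
  have hS (t : ℝ) (ht : t ∈ Icc t0 t1) : HasDerivAt (fun s ↦ (X s).1) (F t).1 t :=
    (ContinuousLinearMap.fst ℝ ℝ ℝ).hasFDerivAt.comp_hasDerivAt t (hX t ht.1)
  have hI (t : ℝ) (ht : t ∈ Icc t0 t1) : HasDerivAt (fun s ↦ (X s).2) (F t).2 t :=
    (ContinuousLinearMap.snd ℝ ℝ ℝ).hasFDerivAt.comp_hasDerivAt t (hX t ht.1)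
  have hSc := HasDerivAt.continuousOn hS
  have hIc := HasDerivAt.continuousOn hI
  have hSnn : ∀ t ∈ Icc t0 t1, 0 ≤ (X t).1 := by
    have := le_of_deriv_right_le_mul_sub (f := fun s ↦ -(X s).1) (c := 0) (K := 0) hSc.neg
      (fun t ht ↦ (hS t (Ico_subset_Icc_self ht)).neg.hasDerivWithinAt) (by simpa using hS0)
      (fun t _ hpos ↦ by
        have hq : max 0 (min (X t).1 1) = 0 := max_eq_left (min_le_of_left_le (by linarith))
        simp [F, sirField, projUnitSquare, hq])
    intro t ht
    simpa using this ht
  have hInn : ∀ t ∈ Icc t0 t1, 0 ≤ (X t).2 := by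
    have := le_of_deriv_right_le_mul_sub (f := fun s ↦ -(X s).2) (c := 0) (K := 0) hIc.neg
      (fun t ht ↦ (hI t (Ico_subset_Icc_self ht)).neg.hasDerivWithinAt) (by simpa using hI0)
      (fun t _ hpos ↦ by
        have hq : max 0 (min (X t).2 1) = 0 := max_eq_left (min_le_of_left_le (by linarith))
        simp [F, sirField, projUnitSquare, hq])
    intro t ht
    simpa using this ht
  have hsum : ∀ t ∈ Icc t0 t1, (X t).1 + (X t).2 ≤ 1 :=
    le_of_deriv_right_le_mul_sub (f := fun s ↦ (X s).1 + (X s).2) (K := 0) (hSc.add hIc)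
      (fun t ht ↦ ((hS t (Ico_subset_Icc_self ht)).add
        (hI t (Ico_subset_Icc_self ht))).hasDerivWithinAt) hsum0
      (fun t _ _ ↦ by
        have := (projUnitSquare_mem (X t)).2.1
        simp only [F, sirField]
        nlinarith)
  have ht1' : t1 ∈ Icc t0 t1 := ⟨ht1, le_rfl⟩
  exact ⟨hSnn t1 ht1', hInn t1 ht1', hsum t1 ht1', by linarith [hSnn t1 ht1', hsum t1 ht1']⟩

theorem le_of_forall_sir_trajectory_mem_GPiSIR {γmin γmax t0 : ℝ} (hγmin : 0 ≤ γmin)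
    (hγ : γmin ≤ γmax) (hI0 : 0 < Imax) (hI1 : Imax ≤ 1)
    (H : ∀ S I γ : ℝ → ℝ,
        Differentiable ℝ S → Differentiable ℝ I →
        (∀ t, t0 ≤ t → γ t ∈ Icc γmin γmax) →
        (∀ t, t0 ≤ t →
          HasDerivAt S (-(betaHat βmin βmax Imax (I t) * S t * I t)) t) →
        (∀ t, t0 ≤ t →
          HasDerivAt I (betaHat βmin βmax Imax (I t) * S t * I t - γ t * I t) t) →
        (S t0, I t0) ∈ GPiSIR Imax →
        ∀ t, t0 ≤ t → (S t, I t) ∈ GPiSIR Imax) :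
    βmin * (1 - Imax) ≤ γmin := by
  obtain ⟨X, hX0, hX⟩ :=
    exists_hasDerivAt_sirField_projUnitSquare βmin βmax γmin Imax t0 (1 - Imax, Imax)
  have hbox := mem_GPiSIR_one_of_hasDerivAt_sirField_projUnitSquare hγmin (fun t _ ↦ hX t)
    (by rw [hX0]; exact ⟨by linarith, hI0.le, by linarith, hI1⟩)
  have hS (t : ℝ) (ht : t0 ≤ t) : HasDerivAt (fun s ↦ (X s).1)
      (-(betaHat βmin βmax Imax (X t).2 * (X t).1 * (X t).2)) t := by
    have := (ContinuousLinearMap.fst ℝ ℝ ℝ).hasFDerivAt.comp_hasDerivAt t (hX t)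
    rwa [projUnitSquare_eq_self (hbox t ht)] at this
  have hI (t : ℝ) (ht : t0 ≤ t) : HasDerivAt (fun s ↦ (X s).2)
      (betaHat βmin βmax Imax (X t).2 * (X t).1 * (X t).2 - γmin * (X t).2) t := by
    have := (ContinuousLinearMap.snd ℝ ℝ ℝ).hasFDerivAt.comp_hasDerivAt t (hX t)
    rwa [projUnitSquare_eq_self (hbox t ht)] at this
  have hinv := H (fun s ↦ (X s).1) (fun s ↦ (X s).2) (fun _ ↦ γmin)
    (fun t ↦ (hX t).differentiableAt.fst) (fun t ↦ (hX t).differentiableAt.snd)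
    (fun _ _ ↦ ⟨le_rfl, hγ⟩) hS hI (by rw [hX0]; exact ⟨by linarith, hI0.le, by linarith, le_rfl⟩)
  have hmax : IsLocalMaxOn (fun s ↦ (X s).2) (Ici t0) t0 :=
    eventually_of_mem self_mem_nhdsWithin fun t ht ↦ by
      simpa [hX0] using (hinv t ht).2.2.2
  have hderiv := hmax.hasDerivWithinAt_Ici_nonpos (hI t0 le_rfl).hasDerivWithinAt
  rw [hX0, betaHat_self hI0.ne'] at hderiv
  nlinarith

end SIR

theorem sir_imperfect_mrpi_eq_GPi_iff_general
    (βmin βmax γmin γmax Imax t0 : ℝ)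
    (hβ : βmin ≤ βmax)
    (hγmin : 0 < γmin) (hγ : γmin ≤ γmax)
    (hI0 : 0 < Imax) (hI1 : Imax < 1) :
    (∀ S I γ : ℝ → ℝ,
        Differentiable ℝ S → Differentiable ℝ I →
        (∀ t, t0 ≤ t → γ t ∈ Set.Icc γmin γmax) →
        (∀ t, t0 ≤ t →
          HasDerivAt S (-(betaHat βmin βmax Imax (I t) * S t * I t)) t) →
        (∀ t, t0 ≤ t →
          HasDerivAt I (betaHat βmin βmax Imax (I t) * S t * I t - γ t * I t) t) →
        (S t0, I t0) ∈ GPiSIR Imax →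
        ∀ t, t0 ≤ t → (S t, I t) ∈ GPiSIR Imax)
      ↔ βmin * (1 - Imax) ≤ γmin :=
  ⟨le_of_forall_sir_trajectory_mem_GPiSIR hγmin.le hγ hI0 hI1.le,
    fun hineq _ _ _ _ _ hγb hS hI h0 ↦
      sir_trajectory_mem_GPiSIR hβ hγmin.le hI0 hineq (fun t ht ↦ (hγb t ht).1) hS hI h0⟩

/-- The MRPI of the closed-loop uncertain SIR model under the affine feedback `β̂`
equals `G_Π` iff `β_min (1 − I_max) ≤ γ_min`. -/
theorem sir_imperfect_mrpi_eq_GPi_iff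
    (βmin βmax γmin γmax Imax t0 : ℝ)
    (hβmin : 0 < βmin) (hβ : βmin ≤ βmax)
    (hγmin : 0 < γmin) (hγ : γmin ≤ γmax)
    (hI0 : 0 < Imax) (hI1 : Imax < 1) :
    (∀ S I γ : ℝ → ℝ,
        Differentiable ℝ S → Differentiable ℝ I →
        (∀ t, t0 ≤ t → γ t ∈ Set.Icc γmin γmax) →
        (∀ t, t0 ≤ t →
          HasDerivAt S (-(betaHat βmin βmax Imax (I t) * S t * I t)) t) →
        (∀ t, t0 ≤ t →
          HasDerivAt I (betaHat βmin βmax Imax (I t) * S t * I t - γ t * I t) t) →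
        (S t0, I t0) ∈ GPiSIR Imax →
        ∀ t, t0 ≤ t → (S t, I t) ∈ GPiSIR Imax)
      ↔ βmin * (1 - Imax) ≤ γmin :=
  sir_imperfect_mrpi_eq_GPi_iff_general βmin βmax γmin γmax Imax t0 hβ hγmin hγ hI0 hI1
end

section
/- Consider the controlled SEIR model. The following are equivalent: (i) for every admissible controlled trajectory (S, E, I, β, γ) with (S(t0), E(t0), I(t0)) ∈ G_Π one has (S(t), E(t), I(t)) ∈ G_Π for all t ≥ t0 (i.e. the maximal robust positively invariant set equals G_Π); (ii) η (1 − I_max) ≤ γ_min I_max. -/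
/-!
In the slack coordinates `S, E, I, 1 - S - E - I, I_max - I` the set `G_Π` is the nonnegative
orthant. At a time where one slack is the smallest and is nonpositive, its derivative is at least
`L` times itself, with `L` uniform on compact time intervals; for the slack `I_max - I` this is
exactly where `η (1 - I_max) ≤ γ_min I_max` enters. Such quasi-positivity keeps the orthant
invariant: the slacks shifted by `ε e^{(L+1)(t-t₀)}` can never reach zero. Conversely, from the
corner `S = 0, E = 1 - I_max, I = I_max` with `β = β_min, γ = γ_min` one has
`I'(t₀) = η (1 - I_max) - γ_min I_max`, so if the condition fails `I` leaves `G_Π` at once.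
-/

def GPiSEIR (Imax : ℝ) : Set (ℝ × ℝ × ℝ) :=
  {p | 0 ≤ p.1 ∧ 0 ≤ p.2.1 ∧ 0 ≤ p.2.2 ∧ p.1 + p.2.1 + p.2.2 ≤ 1 ∧ p.2.2 ≤ Imax}

open Set Filter Topology

theorem eventually_pos_nhdsGT_of_hasDerivWithinAt {f : ℝ → ℝ} {f' x : ℝ}
    (hf : HasDerivWithinAt f f' (Ici x) x) (hx : f x = 0) (hf' : 0 < f') :
    ∀ᶠ y in 𝓝[>] x, 0 < f y := by
  have hslope : Tendsto (slope f x) (𝓝[>] x) (𝓝 f') :=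
    (hasDerivWithinAt_iff_tendsto_slope' self_notMem_Ioi).1 hf.Ioi_of_Ici
  filter_upwards [hslope.eventually (eventually_gt_nhds hf'), self_mem_nhdsWithin]
    with y hy hxy using pos_of_slope_pos hxy hy hx

theorem nonneg_of_deriv_ge_mul_at_min {ι : Type*} [Finite ι] {x x' : ℝ → ι → ℝ} {a b L : ℝ}
    (hcont : ContinuousOn x (Icc a b))
    (hderiv : ∀ t ∈ Ico a b, HasDerivWithinAt x (x' t) (Ici t) t)
    (ha : 0 ≤ x a)
    (hmin : ∀ t ∈ Ico a b, ∀ i, (∀ j, x t i ≤ x t j) → x t i ≤ 0 → L * x t i ≤ x' t i) :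
    ∀ t ∈ Icc a b, 0 ≤ x t := by
  have hbarrier : ∀ ε > 0, ∀ t ∈ Icc a b, ∀ i,
      -(ε * Real.exp ((L + 1) * (t - a))) ≤ x t i := by
    intro ε hε
    set B : ℝ → ℝ := fun u => ε * Real.exp ((L + 1) * (u - a)) with hB
    have hBpos : ∀ u, 0 < B u := fun u => by positivity
    have hB' : ∀ u, HasDerivAt B ((L + 1) * B u) u := fun u =>
      ((((hasDerivAt_id' u).sub_const a).const_mul (L + 1)).exp.const_mul ε).congr_deriv
        (by ring)
    set F : ℝ → ι → ℝ := fun u i => x u i + B u with hF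
    have hF' : ∀ u ∈ Ico a b, ∀ i,
        HasDerivWithinAt (F · i) (x' u i + (L + 1) * B u) (Ici u) u := fun u hu i =>
      (hasDerivWithinAt_pi.1 (hderiv u hu) i).add (hB' u).hasDerivWithinAt
    have hsub : Icc a b ⊆ {u | 0 ≤ F u} := by
      refine IsClosed.Icc_subset_of_forall_mem_nhdsWithin ?_ ?_ ?_
      · rw [inter_comm]
        refine ContinuousOn.preimage_isClosed_of_isClosed ?_ isClosed_Icc
          (isClosed_Ici (a := (0 : ι → ℝ)))
        exact continuousOn_pi.2 fun i => (continuousOn_pi.1 hcont i).add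
          (continuous_iff_continuousAt.2 fun u => (hB' u).continuousAt).continuousOn
      · exact fun i => add_nonneg (ha i) (hBpos a).le
      · rintro u ⟨hu, huIco⟩
        suffices h : ∀ i, ∀ᶠ v in 𝓝[>] u, 0 < F v i from
          (eventually_all.2 h).mono fun v hv i => (hv i).le
        intro i
        rcases (hu i).lt_or_eq with hpos | hzero
        · exact ((hF' u huIco i).continuousWithinAt.eventually
            (eventually_gt_nhds hpos)).filter_mono (nhdsWithin_mono _ Ioi_subset_Ici_self)
        · -- `x u i = -B u` is a smallest, nonpositive coordinate: `(x i + B)' ≥ -L B + (L + 1) B`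
          have hxi : x u i = -B u := by
            simp only [hF, Pi.zero_apply] at hzero; linarith
          have hxi_min : ∀ j, x u i ≤ x u j := fun j => by
            have := hu j; simp only [hF, Pi.zero_apply] at this; linarith
          have hderiv_i := hmin u huIco i hxi_min (by linarith [hBpos u])
          rw [hxi] at hderiv_i
          exact eventually_pos_nhdsGT_of_hasDerivWithinAt (hF' u huIco i) hzero.symm
            (by linarith [hBpos u])
    intro t ht i
    have := hsub ht i
    simp only [hF, hB, Pi.zero_apply] at this
    linarith
  intro t ht i
  have hlim : Tendsto (fun ε => -(ε * Real.exp ((L + 1) * (t - a)))) (𝓝[>] 0) (𝓝 0) :=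
    tendsto_nhdsWithin_of_tendsto_nhds ((by fun_prop : Continuous
      fun ε : ℝ => -(ε * Real.exp ((L + 1) * (t - a)))).tendsto' 0 0 (by simp))
  exact le_of_tendsto hlim (eventually_mem_nhdsWithin.mono fun ε hε => hbarrier ε hε t ht i)

theorem exists_hasDerivAt_eq_sub_mul {f : ℝ → ℝ} (hf : Continuous f) (c t0 y0 : ℝ) :
    ∃ y : ℝ → ℝ, y t0 = y0 ∧ ∀ t, HasDerivAt y (f t - c * y t) t := by
  refine ⟨fun t => Real.exp (c * (t0 - t)) *
    (y0 + ∫ s in t0..t, Real.exp (c * (s - t0)) * f s), by simp, fun t => ?_⟩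
  have hint := ((by fun_prop : Continuous fun s => Real.exp (c * (s - t0)) * f s
    ).integral_hasStrictDerivAt t0 t).hasDerivAt
  have hexp := (((hasDerivAt_id' t).const_sub t0).const_mul c).exp
  have hcancel : Real.exp (c * (t0 - t)) * Real.exp (c * (t - t0)) = 1 := by
    rw [← Real.exp_add]; ring_nf; exact Real.exp_zero
  refine (hexp.mul (hint.const_add y0)).congr_deriv ?_
  linear_combination f t * hcancel

def seirSlack (Imax S E I : ℝ) : Fin 5 → ℝ := ![S, E, I, 1 - S - E - I, Imax - I]

def seirSlackDeriv (η β γ S E I : ℝ) : Fin 5 → ℝ :=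
  ![-(β * S * I), β * S * I - η * E, η * E - γ * I, γ * I, γ * I - η * E]

theorem mem_GPiSEIR_iff_seirSlack_nonneg {Imax S E I : ℝ} :
    (S, E, I) ∈ GPiSEIR Imax ↔ 0 ≤ seirSlack Imax S E I := by
  simp only [GPiSEIR, seirSlack, Set.mem_ofPred_eq, Pi.le_def, Fin.forall_fin_succ,
    Pi.zero_apply, Matrix.cons_val_zero, Matrix.cons_val_succ, IsEmpty.forall_iff, and_true]
  constructor <;> rintro ⟨h1, h2, h3, h4, h5⟩ <;> refine ⟨?_, ?_, ?_, ?_, ?_⟩ <;> linarith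

theorem seirSlack_le_deriv_at_min {η β γ βmax γmin γmax Imax M S E I : ℝ}
    (hη : 0 ≤ η) (hβ : β ∈ Icc 0 βmax) (hγmin : 0 ≤ γmin) (hγ : γ ∈ Icc γmin γmax)
    (hcond : η * (1 - Imax) ≤ γmin * Imax) (hS : |S| ≤ M) (hI : |I| ≤ M) (k : Fin 5)
    (hmin : ∀ j, seirSlack Imax S E I k ≤ seirSlack Imax S E I j)
    (hnonpos : seirSlack Imax S E I k ≤ 0) :
    (βmax * M + η + γmax) * seirSlack Imax S E I k ≤ seirSlackDeriv η β γ S E I k := by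
  obtain ⟨hβ0, hβmax⟩ := hβ
  obtain ⟨hγmin', hγmax⟩ := hγ
  obtain ⟨hS1, hS2⟩ := abs_le.1 hS
  obtain ⟨hI1, hI2⟩ := abs_le.1 hI
  have hM : 0 ≤ M := (abs_nonneg S).trans hS
  have hβmax0 : 0 ≤ βmax * M := mul_nonneg (hβ0.trans hβmax) hM
  simp only [Fin.forall_fin_succ, IsEmpty.forall_iff, and_true] at hmin
  fin_cases k <;>
    simp only [seirSlack, seirSlackDeriv, Fin.zero_eta, Fin.mk_one, Fin.reduceFinMk,
      Matrix.cons_val_zero, Matrix.cons_val_succ, Matrix.cons_val] at hmin hnonpos ⊢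
  · have : 0 ≤ β * I + βmax * M := by nlinarith
    nlinarith [mul_nonneg (neg_nonneg.2 hnonpos) this]
  · have hSI : M * E ≤ S * I := by
      rcases le_total 0 S with hS0 | hS0 <;> rcases le_total 0 I with hI0 | hI0 <;> nlinarith
    nlinarith [mul_le_mul_of_nonneg_left hSI hβ0, mul_nonpos_of_nonneg_of_nonpos
      (sub_nonneg.2 hβmax) (mul_nonpos_of_nonneg_of_nonpos hM hnonpos)]
  · nlinarith [mul_nonpos_of_nonneg_of_nonpos hβmax0 hnonpos]
  · nlinarith [mul_nonpos_of_nonneg_of_nonpos hβmax0 hnonpos]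
  · nlinarith [mul_nonpos_of_nonneg_of_nonpos hβmax0 hnonpos]

def IsRobustlyInvariantGPiSEIR (η βmin βmax γmin γmax Imax t0 : ℝ) : Prop :=
  ∀ S E I β γ : ℝ → ℝ,
    Differentiable ℝ S → Differentiable ℝ E → Differentiable ℝ I →
    (∀ t, t0 ≤ t → β t ∈ Set.Icc βmin βmax) →
    (∀ t, t0 ≤ t → γ t ∈ Set.Icc γmin γmax) →
    (∀ t, t0 ≤ t → HasDerivAt S (-(β t * S t * I t)) t) →
    (∀ t, t0 ≤ t → HasDerivAt E (β t * S t * I t - η * E t) t) →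
    (∀ t, t0 ≤ t → HasDerivAt I (η * E t - γ t * I t) t) →
    (S t0, E t0, I t0) ∈ GPiSEIR Imax →
    ∀ t, t0 ≤ t → (S t, E t, I t) ∈ GPiSEIR Imax

section SEIR

variable {η βmin βmax γmin γmax Imax t0 : ℝ}

theorem seir_mem_GPiSEIR_of_le {S E I β γ : ℝ → ℝ}
    (hη : 0 ≤ η) (hβmin : 0 ≤ βmin) (hγmin : 0 ≤ γmin)
    (hcond : η * (1 - Imax) ≤ γmin * Imax)
    (hβ : ∀ t, t0 ≤ t → β t ∈ Icc βmin βmax) (hγ : ∀ t, t0 ≤ t → γ t ∈ Icc γmin γmax)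
    (hS : ∀ t, t0 ≤ t → HasDerivAt S (-(β t * S t * I t)) t)
    (hE : ∀ t, t0 ≤ t → HasDerivAt E (β t * S t * I t - η * E t) t)
    (hI : ∀ t, t0 ≤ t → HasDerivAt I (η * E t - γ t * I t) t)
    (h0 : (S t0, E t0, I t0) ∈ GPiSEIR Imax) :
    ∀ t, t0 ≤ t → (S t, E t, I t) ∈ GPiSEIR Imax := by
  intro t1 ht1
  set x : ℝ → Fin 5 → ℝ := fun t => seirSlack Imax (S t) (E t) (I t)
  have hx' : ∀ t, t0 ≤ t →
      HasDerivAt x (seirSlackDeriv η (β t) (γ t) (S t) (E t) (I t)) t := by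
    intro t ht
    refine hasDerivAt_pi.2 fun k => ?_
    fin_cases k
    · exact hS t ht
    · exact hE t ht
    · exact hI t ht
    · exact ((((hasDerivAt_const t 1).sub (hS t ht)).sub (hE t ht)).sub (hI t ht)).congr_deriv
        (by simp [seirSlackDeriv])
    · exact ((hasDerivAt_const t Imax).sub (hI t ht)).congr_deriv
        (by simp [seirSlackDeriv])
  have hxcont : ContinuousOn x (Icc t0 t1) := fun t ht =>
    (hx' t ht.1).continuousAt.continuousWithinAt
  obtain ⟨M, hM⟩ := isCompact_Icc.exists_bound_of_continuousOn hxcont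
  have hbound : ∀ t ∈ Icc t0 t1, ∀ k, |x t k| ≤ M := fun t ht k =>
    (norm_le_pi_norm (x t) k).trans (hM t ht)
  rw [mem_GPiSEIR_iff_seirSlack_nonneg] at h0 ⊢
  refine nonneg_of_deriv_ge_mul_at_min (L := βmax * M + η + γmax) hxcont
    (fun t ht => (hx' t ht.1).hasDerivWithinAt) h0 (fun t ht k hmin hnonpos => ?_)
    t1 ⟨ht1, le_rfl⟩
  obtain ⟨hβ1, hβ2⟩ := hβ t ht.1
  exact seirSlack_le_deriv_at_min hη ⟨hβmin.trans hβ1, hβ2⟩ hγmin (hγ t ht.1) hcond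
    (hbound t (Ico_subset_Icc_self ht) 0) (hbound t (Ico_subset_Icc_self ht) 2) k hmin hnonpos

theorem le_of_isRobustlyInvariantGPiSEIR (hβ : βmin ≤ βmax) (hγ : γmin ≤ γmax)
    (hI0 : 0 ≤ Imax) (hI1 : Imax ≤ 1)
    (hinv : IsRobustlyInvariantGPiSEIR η βmin βmax γmin γmax Imax t0) :
    η * (1 - Imax) ≤ γmin * Imax := by
  by_contra! hlt
  unfold IsRobustlyInvariantGPiSEIR at hinv
  set E : ℝ → ℝ := fun t => (1 - Imax) * Real.exp (η * (t0 - t)) with hEdef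
  have hE : ∀ t, HasDerivAt E (-(η * E t)) t := fun t =>
    ((((hasDerivAt_id' t).const_sub t0).const_mul η).exp.const_mul (1 - Imax)).congr_deriv
      (by ring)
  obtain ⟨I, hIt0, hI⟩ := exists_hasDerivAt_eq_sub_mul (f := fun t => η * E t) (by fun_prop)
    γmin t0 Imax
  have hmem := hinv (fun _ => 0) E I (fun _ => βmin) (fun _ => γmin) (differentiable_const 0)
    (fun t => (hE t).differentiableAt) (fun t => (hI t).differentiableAt)
    (fun _ _ => ⟨le_rfl, hβ⟩) (fun _ _ => ⟨le_rfl, hγ⟩)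
    (fun t _ => by simpa using hasDerivAt_const t (0 : ℝ))
    (fun t _ => (hE t).congr_deriv (by ring)) (fun t _ => hI t)
    ⟨le_rfl, by simp [hEdef]; linarith, by simp [hIt0, hI0], by simp [hEdef, hIt0], hIt0.le⟩
  have hescape : ∀ᶠ t in 𝓝[>] t0, 0 < I t - Imax :=
    eventually_pos_nhdsGT_of_hasDerivWithinAt ((hI t0).sub_const Imax).hasDerivWithinAt
      (by simp [hIt0]) (by simp [hEdef, hIt0]; linarith)
  obtain ⟨t, ht, htt0⟩ := (hescape.and self_mem_nhdsWithin).exists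
  linarith [(hmem t htt0.le).2.2.2.2]

end SEIR

/-- The MRPI of the controlled SEIR model equals `G_Π` iff
`η (1 − I_max) ≤ γ_min I_max`. -/
theorem seir_mrpi_eq_GPi_iff
    (η βmin βmax γmin γmax Imax t0 : ℝ)
    (hη : 0 < η) (hβmin : 0 < βmin) (hβ : βmin ≤ βmax)
    (hγmin : 0 < γmin) (hγ : γmin ≤ γmax)
    (hI0 : 0 < Imax) (hI1 : Imax < 1) :
    (∀ S E I β γ : ℝ → ℝ,
        Differentiable ℝ S → Differentiable ℝ E → Differentiable ℝ I →
        (∀ t, t0 ≤ t → β t ∈ Set.Icc βmin βmax) →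
        (∀ t, t0 ≤ t → γ t ∈ Set.Icc γmin γmax) →
        (∀ t, t0 ≤ t → HasDerivAt S (-(β t * S t * I t)) t) →
        (∀ t, t0 ≤ t → HasDerivAt E (β t * S t * I t - η * E t) t) →
        (∀ t, t0 ≤ t → HasDerivAt I (η * E t - γ t * I t) t) →
        (S t0, E t0, I t0) ∈ GPiSEIR Imax →
        ∀ t, t0 ≤ t → (S t, E t, I t) ∈ GPiSEIR Imax)
      ↔ η * (1 - Imax) ≤ γmin * Imax :=
  ⟨le_of_isRobustlyInvariantGPiSEIR hβ hγ hI0.le hI1.le,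
    fun hcond _ _ _ _ _ _ _ _ hβr hγr hS hE hI h0 =>
      seir_mem_GPiSEIR_of_le hη.le hβmin.le hγmin.le hcond hβr hγr hS hE hI h0⟩
end

section
/- For the controlled SEIR model: if differentiable functions S, E, I, R : ℝ → ℝ satisfy S'(t) = −β(t) S(t) I(t), E'(t) = β(t) S(t) I(t) − η E(t), I'(t) = η E(t) − γ(t) I(t), R'(t) = γ(t) I(t) for all t ≥ t0, where η > 0, β(t) ∈ [β_min, β_max] with 0 < β_min ≤ β_max, and γ(t) ∈ [γ_min, γ_max] with 0 < γ_min ≤ γ_max, and if (S(t0), E(t0), I(t0), R(t0)) ∈ Π, then (S(t), E(t), I(t), R(t)) ∈ Π for all t ≥ t0; that is, the simplex Π is positively invariant for the SEIR model. -/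
open Set Filter Topology Asymptotics

/-!
The total `S + E + I + R` has derivative zero, so it stays equal to `1`, and the upper bounds
follow from nonnegativity. For nonnegativity, `V = (S⁻)² + (E⁻)² + (I⁻)² + (R⁻)²` is
differentiable (as `x ↦ (x⁻)²` is `C¹`) and vanishes at `t0`. The vector field is quasi-positive:
each right-hand side is nonnegative when its own variable vanishes and the others are nonnegative.
Quantitatively, on `[t0, T]`, where `S` and `I` are bounded by some `M`, this gives `V' ≤ K V`
with `K = 3 βmax M + η + γmax`, and Grönwall's inequality forces `V = 0`.
-/

theorem negPart_le_abs {α : Type*} [Lattice α] [AddGroup α] [AddLeftMono α] [AddRightMono α]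
    (a : α) : a⁻ ≤ |a| := by
  rw [← negPart_add_posPart]
  exact le_add_of_nonneg_right (posPart_nonneg a)

section OrderedRing

variable {α : Type*} [CommRing α] [LinearOrder α] [IsStrictOrderedRing α]

theorem negPart_mul_self (x : α) : x⁻ * x = -x⁻ ^ 2 := by
  rcases le_total x 0 with hx | hx
  · rw [negPart_eq_neg.2 hx]; ring
  · rw [negPart_eq_zero.2 hx]; ring

theorem neg_mul_negPart_add_negPart_le_mul {x y M : α} (hx : |x| ≤ M) (hy : |y| ≤ M) :
    -(M * (x⁻ + y⁻)) ≤ x * y := by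
  rcases le_total x 0 with hx0 | hx0 <;> rcases le_total y 0 with hy0 | hy0
  all_goals simp only [negPart_eq_neg.2, negPart_eq_zero.2, *]
  all_goals nlinarith [abs_le.1 hx, abs_le.1 hy]

end OrderedRing

theorem hasDerivAt_negPart_sq (x : ℝ) : HasDerivAt (fun y : ℝ => y⁻ ^ 2) (-(2 * x⁻)) x := by
  rcases lt_trichotomy x 0 with hx | rfl | hx
  · have h : (fun y : ℝ => y⁻ ^ 2) =ᶠ[𝓝 x] fun y => y ^ 2 := by
      filter_upwards [Iio_mem_nhds hx] with y hy
      rw [negPart_eq_neg.2 hy.le, neg_sq]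
    refine ((hasDerivAt_pow 2 x).congr_of_eventuallyEq h).congr_deriv ?_
    rw [negPart_eq_neg.2 hx.le]; ring
  · rw [hasDerivAt_iff_isLittleO_nhds_zero]
    simp only [zero_add, negPart_zero]
    refine IsBigO.trans_isLittleO ?_ (isLittleO_pow_id (n := 2) one_lt_two)
    refine IsBigO.of_bound 1 (Eventually.of_forall fun y => ?_)
    simpa using (pow_le_pow_left₀ (negPart_nonneg y) (negPart_le_abs y) 2).trans_eq (sq_abs y)
  · have h : (fun y : ℝ => y⁻ ^ 2) =ᶠ[𝓝 x] fun _ => 0 := by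
      filter_upwards [Ioi_mem_nhds hx] with y hy
      rw [negPart_eq_zero.2 hy.le]; ring
    refine ((hasDerivAt_const x (0 : ℝ)).congr_of_eventuallyEq h).congr_deriv ?_
    rw [negPart_eq_zero.2 hx.le]; ring

theorem HasDerivAt.negPart_sq {f : ℝ → ℝ} {f' x : ℝ} (hf : HasDerivAt f f' x) :
    HasDerivAt (fun y => (f y)⁻ ^ 2) (-(2 * (f x)⁻ * f')) x :=
  ((hasDerivAt_negPart_sq (f x)).comp x hf).congr_deriv (by ring)

theorem nonpos_of_hasDerivWithinAt_le_mul {f f' : ℝ → ℝ} {K a b : ℝ}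
    (hf : ContinuousOn f (Icc a b)) (hf' : ∀ x ∈ Ico a b, HasDerivWithinAt f (f' x) (Ici x) x)
    (ha : f a ≤ 0) (bound : ∀ x ∈ Ico a b, f' x ≤ K * f x) : ∀ x ∈ Icc a b, f x ≤ 0 := fun x hx =>
  (le_gronwallBound_of_liminf_deriv_right_le hf
    (fun x hx _ hr => (hf' x hx).liminf_right_slope_le hr) ha (by simpa using bound) x hx).trans_eq
    (gronwallBound_ε0_δ0 _ _)

theorem seir_negPart_sq_deriv_le {s e i r b g η B G M : ℝ} (hη : 0 ≤ η) (hb : b ∈ Icc 0 B)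
    (hg : g ∈ Icc 0 G) (hs : |s| ≤ M) (hi : |i| ≤ M) :
    -(2 * s⁻ * -(b * s * i)) + -(2 * e⁻ * (b * s * i - η * e)) + -(2 * i⁻ * (η * e - g * i))
        + -(2 * r⁻ * (g * i)) ≤ (3 * B * M + η + G) * (s⁻ ^ 2 + e⁻ ^ 2 + i⁻ ^ 2 + r⁻ ^ 2) := by
  obtain ⟨hb0, hbB⟩ := hb
  obtain ⟨hg0, hgG⟩ := hg
  have hM : 0 ≤ M := (abs_nonneg s).trans hs
  have hBM : 0 ≤ B * M := mul_nonneg (hb0.trans hbB) hM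
  have he' := negPart_nonneg e
  have hi' := negPart_nonneg i
  have hr' := negPart_nonneg r
  have hS : -(2 * s⁻ * -(b * s * i)) ≤ 2 * (B * M) * s⁻ ^ 2 := by
    have hbi : b * -i ≤ B * M := (mul_le_mul_of_nonneg_left ((neg_le_abs i).trans hi) hb0).trans
      (mul_le_mul_of_nonneg_right hbB hM)
    calc -(2 * s⁻ * -(b * s * i)) = 2 * (b * -i) * s⁻ ^ 2 := by
          linear_combination (2 * b * i) * negPart_mul_self s
      _ ≤ 2 * (B * M) * s⁻ ^ 2 := by gcongr
  have hE : -(2 * e⁻ * (b * s * i - η * e)) ≤ 2 * (B * M) * e⁻ * (s⁻ + i⁻) := by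
    have hbsi : b * -(s * i) ≤ B * (M * (s⁻ + i⁻)) :=
      (mul_le_mul_of_nonneg_left (neg_le.1 (neg_mul_negPart_add_negPart_le_mul hs hi)) hb0).trans
        (mul_le_mul_of_nonneg_right hbB (by positivity))
    calc -(2 * e⁻ * (b * s * i - η * e)) = 2 * (b * -(s * i)) * e⁻ - 2 * η * e⁻ ^ 2 := by
          linear_combination (2 * η) * negPart_mul_self e
      _ ≤ 2 * (B * (M * (s⁻ + i⁻))) * e⁻ := by nlinarith [mul_nonneg hη (sq_nonneg e⁻)]
      _ = 2 * (B * M) * e⁻ * (s⁻ + i⁻) := by ring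
  have hI : -(2 * i⁻ * (η * e - g * i)) ≤ 2 * η * e⁻ * i⁻ := by
    have := negPart_mul_self i
    have := neg_le_negPart e
    nlinarith [mul_nonneg hη hi', mul_nonneg hg0 (sq_nonneg i⁻)]
  have hR : -(2 * r⁻ * (g * i)) ≤ 2 * G * r⁻ * i⁻ := by
    have := neg_le_negPart i
    nlinarith [mul_nonneg hg0 hr', mul_nonneg (sub_nonneg.2 hgG) (mul_nonneg hr' hi')]
  have hG := hg0.trans hgG
  nlinarith [mul_nonneg hBM (sq_nonneg (e⁻ - s⁻)), mul_nonneg hBM (sq_nonneg (e⁻ - i⁻)),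
    mul_nonneg hη (sq_nonneg (e⁻ - i⁻)), mul_nonneg hG (sq_nonneg (r⁻ - i⁻)),
    mul_nonneg hBM (sq_nonneg s⁻), mul_nonneg hη (sq_nonneg s⁻), mul_nonneg hG (sq_nonneg s⁻)]

section SEIR

variable {η βmax γmax t0 : ℝ} {S E I R β γ : ℝ → ℝ}

theorem seir_total_eq (hS : ∀ t, t0 ≤ t → HasDerivAt S (-(β t * S t * I t)) t)
    (hE : ∀ t, t0 ≤ t → HasDerivAt E (β t * S t * I t - η * E t) t)
    (hI : ∀ t, t0 ≤ t → HasDerivAt I (η * E t - γ t * I t) t)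
    (hR : ∀ t, t0 ≤ t → HasDerivAt R (γ t * I t) t) (t : ℝ) (ht : t0 ≤ t) :
    S t + E t + I t + R t = S t0 + E t0 + I t0 + R t0 := by
  have hN : ∀ x, t0 ≤ x → HasDerivAt (fun x => S x + E x + I x + R x) 0 x := fun x hx =>
    ((((hS x hx).add (hE x hx)).add (hI x hx)).add (hR x hx)).congr_deriv (by ring)
  exact constant_of_has_deriv_right_zero (fun x hx => (hN x hx.1).continuousAt.continuousWithinAt)
    (fun x hx => (hN x hx.1).hasDerivWithinAt) t ⟨ht, le_rfl⟩

theorem seir_nonneg (hη : 0 ≤ η) (hβ : ∀ t, t0 ≤ t → β t ∈ Icc 0 βmax)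
    (hγ : ∀ t, t0 ≤ t → γ t ∈ Icc 0 γmax)
    (hS : ∀ t, t0 ≤ t → HasDerivAt S (-(β t * S t * I t)) t)
    (hE : ∀ t, t0 ≤ t → HasDerivAt E (β t * S t * I t - η * E t) t)
    (hI : ∀ t, t0 ≤ t → HasDerivAt I (η * E t - γ t * I t) t)
    (hR : ∀ t, t0 ≤ t → HasDerivAt R (γ t * I t) t)
    (h0 : 0 ≤ S t0 ∧ 0 ≤ E t0 ∧ 0 ≤ I t0 ∧ 0 ≤ R t0) (T : ℝ) (hT : t0 ≤ T) :
    0 ≤ S T ∧ 0 ≤ E T ∧ 0 ≤ I T ∧ 0 ≤ R T := by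
  -- `ℝ × ℝ` carries the sup norm, so one bound controls both `|S|` and `|I|`.
  obtain ⟨M, hM⟩ := (isCompact_Icc (a := t0) (b := T)).exists_bound_of_continuousOn
    (f := fun t => (S t, I t)) fun x hx =>
      ((hS x hx.1).continuousAt.prodMk (hI x hx.1).continuousAt).continuousWithinAt
  have hV : ∀ x, t0 ≤ x → HasDerivAt (fun t => (S t)⁻ ^ 2 + (E t)⁻ ^ 2 + (I t)⁻ ^ 2 + (R t)⁻ ^ 2)
      (-(2 * (S x)⁻ * -(β x * S x * I x)) + -(2 * (E x)⁻ * (β x * S x * I x - η * E x))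
        + -(2 * (I x)⁻ * (η * E x - γ x * I x)) + -(2 * (R x)⁻ * (γ x * I x))) x := fun x hx =>
    (((hS x hx).negPart_sq.add (hE x hx).negPart_sq).add (hI x hx).negPart_sq).add
      (hR x hx).negPart_sq
  have hVT := nonpos_of_hasDerivWithinAt_le_mul (K := 3 * βmax * M + η + γmax)
    (fun x hx => (hV x hx.1).continuousAt.continuousWithinAt)
    (fun x hx => (hV x hx.1).hasDerivWithinAt)
    (by simp [h0])
    (fun x hx => seir_negPart_sq_deriv_le hη (hβ x hx.1) (hγ x hx.1)
      ((norm_fst_le _).trans (hM x (Ico_subset_Icc_self hx)))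
      ((norm_snd_le _).trans (hM x (Ico_subset_Icc_self hx)))) T ⟨hT, le_rfl⟩
  have hsq : ∀ x : ℝ, x⁻ ^ 2 ≤ 0 → 0 ≤ x := fun x hx =>
    negPart_eq_zero.1 (pow_eq_zero_iff two_ne_zero |>.1 (hx.antisymm (sq_nonneg _)))
  refine ⟨hsq _ ?_, hsq _ ?_, hsq _ ?_, hsq _ ?_⟩ <;>
    linarith [sq_nonneg (S T)⁻, sq_nonneg (E T)⁻, sq_nonneg (I T)⁻, sq_nonneg (R T)⁻]

end SEIR

theorem seir_simplex_positively_invariant_general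
    (η βmin βmax γmin γmax t0 : ℝ) (S E I R β γ : ℝ → ℝ)
    (hη : 0 < η) (hβmin : 0 < βmin)
    (hγmin : 0 < γmin)
    (hβmem : ∀ t, t0 ≤ t → β t ∈ Set.Icc βmin βmax)
    (hγmem : ∀ t, t0 ≤ t → γ t ∈ Set.Icc γmin γmax)
    (hS : ∀ t, t0 ≤ t → HasDerivAt S (-(β t * S t * I t)) t)
    (hE : ∀ t, t0 ≤ t → HasDerivAt E (β t * S t * I t - η * E t) t)
    (hI : ∀ t, t0 ≤ t → HasDerivAt I (η * E t - γ t * I t) t)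
    (hR : ∀ t, t0 ≤ t → HasDerivAt R (γ t * I t) t)
    (h0 : S t0 ∈ Set.Icc (0 : ℝ) 1 ∧ E t0 ∈ Set.Icc (0 : ℝ) 1 ∧
          I t0 ∈ Set.Icc (0 : ℝ) 1 ∧ R t0 ∈ Set.Icc (0 : ℝ) 1 ∧
          S t0 + E t0 + I t0 + R t0 = 1) :
    ∀ t, t0 ≤ t →
      S t ∈ Set.Icc (0 : ℝ) 1 ∧ E t ∈ Set.Icc (0 : ℝ) 1 ∧
      I t ∈ Set.Icc (0 : ℝ) 1 ∧ R t ∈ Set.Icc (0 : ℝ) 1 ∧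
      S t + E t + I t + R t = 1 := by
  obtain ⟨⟨hS0, -⟩, ⟨hE0, -⟩, ⟨hI0, -⟩, ⟨hR0, -⟩, hsum0⟩ := h0
  intro t ht
  have hsum := seir_total_eq hS hE hI hR t ht
  obtain ⟨hSt, hEt, hIt, hRt⟩ := seir_nonneg hη.le
    (fun t ht => Icc_subset_Icc_left hβmin.le (hβmem t ht))
    (fun t ht => Icc_subset_Icc_left hγmin.le (hγmem t ht)) hS hE hI hR ⟨hS0, hE0, hI0, hR0⟩ t ht
  refine ⟨⟨hSt, ?_⟩, ⟨hEt, ?_⟩, ⟨hIt, ?_⟩, ⟨hRt, ?_⟩, hsum.trans hsum0⟩ <;> linarith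

/-- The probability simplex `Π = {(S, E, I, R) ∈ [0,1]⁴ : S + E + I + R = 1}`
is positively invariant for the controlled SEIR model. -/
theorem seir_simplex_positively_invariant
    (η βmin βmax γmin γmax t0 : ℝ) (S E I R β γ : ℝ → ℝ)
    (hη : 0 < η) (hβmin : 0 < βmin) (hβ : βmin ≤ βmax)
    (hγmin : 0 < γmin) (hγ : γmin ≤ γmax)
    (hSd : Differentiable ℝ S) (hEd : Differentiable ℝ E)
    (hId : Differentiable ℝ I) (hRd : Differentiable ℝ R)
    (hβmem : ∀ t, t0 ≤ t → β t ∈ Set.Icc βmin βmax)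
    (hγmem : ∀ t, t0 ≤ t → γ t ∈ Set.Icc γmin γmax)
    (hS : ∀ t, t0 ≤ t → HasDerivAt S (-(β t * S t * I t)) t)
    (hE : ∀ t, t0 ≤ t → HasDerivAt E (β t * S t * I t - η * E t) t)
    (hI : ∀ t, t0 ≤ t → HasDerivAt I (η * E t - γ t * I t) t)
    (hR : ∀ t, t0 ≤ t → HasDerivAt R (γ t * I t) t)
    (h0 : S t0 ∈ Set.Icc (0 : ℝ) 1 ∧ E t0 ∈ Set.Icc (0 : ℝ) 1 ∧
          I t0 ∈ Set.Icc (0 : ℝ) 1 ∧ R t0 ∈ Set.Icc (0 : ℝ) 1 ∧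
          S t0 + E t0 + I t0 + R t0 = 1) :
    ∀ t, t0 ≤ t →
      S t ∈ Set.Icc (0 : ℝ) 1 ∧ E t ∈ Set.Icc (0 : ℝ) 1 ∧
      I t ∈ Set.Icc (0 : ℝ) 1 ∧ R t ∈ Set.Icc (0 : ℝ) 1 ∧
      S t + E t + I t + R t = 1 :=
  seir_simplex_positively_invariant_general η βmin βmax γmin γmax t0 S E I R β γ hη hβmin hγmin
    hβmem hγmem hS hE hI hR h0
end

section
/- (Non-singularity of the switching function for the perfect SIR barrier.) Let γ > 0, let J ⊆ ℝ be a nondegenerate interval, let β, S, I : ℝ → ℝ be arbitrary functions, and let λ₁, λ₂ : ℝ → ℝ be differentiable on J and satisfy the SIR adjoint equations λ₁'(t) = β(t) I(t) λ₁(t) − β(t) I(t) λ₂(t) and λ₂'(t) = β(t) S(t) λ₁(t) + (−β(t) S(t) + γ) λ₂(t) for all t ∈ J. If λ₂(t) − λ₁(t) = 0 for all t ∈ J, then λ₁(t) = λ₂(t) = 0 for all t ∈ J. Consequently, a nowhere-vanishing adjoint solution cannot have λ₂ − λ₁ ≡ 0 on any interval, so the bang-bang barrier input of the perfect SIR model switches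 only at isolated points in time. -/
/-! Along the adjoint equations the switching function `lam₂ - lam₁` has derivative
`β S lam₁ - β I lam₁ + (β I - β S + γ) lam₂`, which is `γ lam₂` wherever `lam₁ = lam₂`.
If the switching function vanishes on a nondegenerate interval its derivative there is also `0`,
so `γ lam₂ = 0`, and `γ ≠ 0` forces `lam₂ = 0 = lam₁`. -/

theorem Set.OrdConnected.uniqueDiffOn {J : Set ℝ} (hJ : J.OrdConnected) {a b : ℝ}
    (ha : a ∈ J) (hb : b ∈ J) (hab : a < b) : UniqueDiffOn ℝ J := by
  have hIoo : Set.Ioo a b ⊆ interior J :=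
    isOpen_Ioo.subset_interior_iff.mpr fun _ hx => hJ.out ha hb (Set.Ioo_subset_Icc_self hx)
  exact uniqueDiffOn_convex hJ.convex ((Set.nonempty_Ioo.mpr hab).mono hIoo)

theorem HasDerivWithinAt.eq_zero_of_eqOn_zero {𝕜 F : Type*} [NontriviallyNormedField 𝕜]
    [NormedAddCommGroup F] [NormedSpace 𝕜 F] {f : 𝕜 → F} {f' : F} {s : Set 𝕜} {x : 𝕜}
    (h : HasDerivWithinAt f f' s x) (hs : UniqueDiffWithinAt 𝕜 s x) (hf : Set.EqOn f 0 s)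
    (hx : x ∈ s) : f' = 0 :=
  hs.eq_deriv s h ((hasDerivWithinAt_const x s 0).congr hf (hf hx))

/-- Non-singularity of the switching function for the perfect SIR barrier:
if a solution `(lam₁, lam₂)` of the SIR adjoint equations on a nondegenerate
interval `J` satisfies `lam₂ − lam₁ ≡ 0` on `J`, then it vanishes identically
on `J`. Consequently a nowhere-vanishing adjoint solution cannot have
`lam₂ − lam₁ ≡ 0` on any interval, so the bang-bang barrier input of the
perfect SIR model switches only at isolated points in time. -/
theorem sir_adjoint_switching_nonsingular
    (γ : ℝ) (hγ : 0 < γ)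
    (J : Set ℝ) (hJ : J.OrdConnected) (hJne : ∃ a ∈ J, ∃ b ∈ J, a < b)
    (β S I lam₁ lam₂ : ℝ → ℝ)
    (hlam₁ : ∀ t ∈ J,
      HasDerivWithinAt lam₁ (β t * I t * lam₁ t - β t * I t * lam₂ t) J t)
    (hlam₂ : ∀ t ∈ J,
      HasDerivWithinAt lam₂ (β t * S t * lam₁ t + (-(β t * S t) + γ) * lam₂ t) J t)
    (hswitch : ∀ t ∈ J, lam₂ t - lam₁ t = 0) :
    ∀ t ∈ J, lam₁ t = 0 ∧ lam₂ t = 0 := by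
  obtain ⟨a, ha, b, hb, hab⟩ := hJne
  intro t ht
  have heq : lam₁ t = lam₂ t := (sub_eq_zero.mp (hswitch t ht)).symm
  have hderiv : HasDerivWithinAt (fun s => lam₂ s - lam₁ s) (γ * lam₂ t) J t :=
    ((hlam₂ t ht).sub (hlam₁ t ht)).congr_deriv (by rw [heq]; ring)
  have hγlam₂ : γ * lam₂ t = 0 :=
    hderiv.eq_zero_of_eqOn_zero (hJ.uniqueDiffOn ha hb hab t ht) hswitch ht
  have hlam₂t : lam₂ t = 0 := (mul_eq_zero.mp hγlam₂).resolve_left hγ.ne'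
  exact ⟨heq.trans hlam₂t, hlam₂t⟩
end

section
/- (Non-singularity of the β-switching function for the perfect SEIR barrier.) Let η > 0, let J ⊆ ℝ be a nondegenerate interval, let β, γ, S, I : ℝ → ℝ be functions with γ(t) > 0 for all t ∈ J, and let λ₁, λ₂, λ₃ : ℝ → ℝ be differentiable on J and satisfy the SEIR adjoint equations λ₁' = β I λ₁ − β I λ₂, λ₂' = η λ₂ − η λ₃, λ₃' = β S λ₁ − β S λ₂ + γ λ₃ on J. If λ₂(t) − λ₁(t) = 0 for all t ∈ J, then λ₁(t) = λ₂(t) = λ₃(t) = 0 for all t ∈ J. -/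
/-- Non-singularity of the β-switching function for the perfect SEIR barrier:
if a solution `(lam₁, lam₂, lam₃)` of the SEIR adjoint equations on a
nondegenerate interval `J` satisfies `lam₂ − lam₁ ≡ 0` on `J`, then it
vanishes identically on `J`. -/
theorem seir_adjoint_beta_switching_nonsingular
    (η : ℝ) (hη : 0 < η)
    (J : Set ℝ) (hJ : J.OrdConnected) (hJne : ∃ a ∈ J, ∃ b ∈ J, a < b)
    (β γ S I lam₁ lam₂ lam₃ : ℝ → ℝ)
    (hγpos : ∀ t ∈ J, 0 < γ t)
    (hlam₁ : ∀ t ∈ J,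
      HasDerivWithinAt lam₁ (β t * I t * lam₁ t - β t * I t * lam₂ t) J t)
    (hlam₂ : ∀ t ∈ J,
      HasDerivWithinAt lam₂ (η * lam₂ t - η * lam₃ t) J t)
    (hlam₃ : ∀ t ∈ J,
      HasDerivWithinAt lam₃ (β t * S t * lam₁ t - β t * S t * lam₂ t + γ t * lam₃ t) J t)
    (hswitch : ∀ t ∈ J, lam₂ t - lam₁ t = 0) :
    ∀ t ∈ J, lam₁ t = 0 ∧ lam₂ t = 0 ∧ lam₃ t = 0 := by
  have hconv : Convex ℝ J := hJ.convex
  obtain ⟨a, ha, b, hb, hab⟩ := hJne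
  have hint : (interior J).Nonempty := by
    have hsub : Set.Ioo a b ⊆ interior J := by
      rw [← interior_Icc]
      exact interior_mono (hJ.out ha hb)
    exact ⟨(a + b) / 2, hsub ⟨by linarith, by linarith⟩⟩
  have huniq : ∀ t ∈ J, UniqueDiffWithinAt ℝ J t := fun t ht =>
    uniqueDiffWithinAt_convex hconv hint (subset_closure ht)
  have heq : ∀ t ∈ J, lam₂ t = lam₁ t := fun t ht => by
    have := hswitch t ht; linarith
  -- lam₂ has derivative 0 within J at each point
  have hd2 : ∀ t ∈ J, HasDerivWithinAt lam₂ 0 J t := fun t ht => by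
    have h1 : HasDerivWithinAt lam₁ 0 J t := by
      have := hlam₁ t ht
      rwa [heq t ht, sub_self] at this
    exact h1.congr heq (heq t ht)
  -- uniqueness: η lam₂ - η lam₃ = 0
  have h23 : ∀ t ∈ J, lam₃ t = lam₂ t := fun t ht => by
    have hu := huniq t ht
    have e1 := (hlam₂ t ht).derivWithin hu
    have e2 := (hd2 t ht).derivWithin hu
    have : η * lam₂ t - η * lam₃ t = 0 := by rw [← e1, e2]
    have := mul_left_cancel₀ (ne_of_gt hη) (by linarith : η * lam₃ t = η * lam₂ t)
    linarith
  have hd3 : ∀ t ∈ J, HasDerivWithinAt lam₃ 0 J t := fun t ht =>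
    (hd2 t ht).congr h23 (h23 t ht)
  intro t ht
  have hu := huniq t ht
  have e1 := (hlam₃ t ht).derivWithin hu
  have e2 := (hd3 t ht).derivWithin hu
  have h0 : β t * S t * lam₁ t - β t * S t * lam₂ t + γ t * lam₃ t = 0 := by
    rw [← e1, e2]
  rw [heq t ht, sub_self, zero_add] at h0
  have h3 : lam₃ t = 0 := by
    rcases mul_eq_zero.1 h0 with h | h
    · exact absurd h (ne_of_gt (hγpos t ht))
    · exact h
  have h2 : lam₂ t = 0 := (h23 t ht) ▸ h3
  exact ⟨(heq t ht) ▸ h2, h2, h3⟩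
end

section
/- (Non-singularity of the γ-switching function for the perfect SEIR barrier.) Let η > 0, let J ⊆ ℝ be a nondegenerate interval, let β, γ, S, I : ℝ → ℝ be functions with β(t) > 0, γ(t) > 0 and S(t) ≠ 0 for all t ∈ J, and let λ₁, λ₂, λ₃ : ℝ → ℝ be differentiable on J and satisfy the SEIR adjoint equations λ₁' = β I λ₁ − β I λ₂, λ₂' = η λ₂ − η λ₃, λ₃' = β S λ₁ − β S λ₂ + γ λ₃ on J. If λ₃(t) = 0 for all t ∈ J, then λ₁(t) = λ₂(t) = λ₃(t) = 0 for all t ∈ J. -/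
/-- Non-singularity of the γ-switching function for the perfect SEIR barrier:
if a solution `(lam₁, lam₂, lam₃)` of the SEIR adjoint equations on a
nondegenerate interval `J` (with `β > 0`, `γ > 0` and `S ≠ 0` on `J`)
satisfies `lam₃ ≡ 0` on `J`, then it vanishes identically on `J`. -/
theorem seir_adjoint_gamma_switching_nonsingular
    (η : ℝ) (hη : 0 < η)
    (J : Set ℝ) (hJ : J.OrdConnected) (hJne : ∃ a ∈ J, ∃ b ∈ J, a < b)
    (β γ S I lam₁ lam₂ lam₃ : ℝ → ℝ)
    (hβpos : ∀ t ∈ J, 0 < β t)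
    (hγpos : ∀ t ∈ J, 0 < γ t)
    (hSne : ∀ t ∈ J, S t ≠ 0)
    (hlam₁ : ∀ t ∈ J,
      HasDerivWithinAt lam₁ (β t * I t * lam₁ t - β t * I t * lam₂ t) J t)
    (hlam₂ : ∀ t ∈ J,
      HasDerivWithinAt lam₂ (η * lam₂ t - η * lam₃ t) J t)
    (hlam₃ : ∀ t ∈ J,
      HasDerivWithinAt lam₃ (β t * S t * lam₁ t - β t * S t * lam₂ t + γ t * lam₃ t) J t)
    (hswitch : ∀ t ∈ J, lam₃ t = 0) :
    ∀ t ∈ J, lam₁ t = 0 ∧ lam₂ t = 0 ∧ lam₃ t = 0 := by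
  obtain ⟨a, ha, b, hb, hab⟩ := hJne
  have hconv : Convex ℝ J := convex_iff_ordConnected.2 hJ
  have hint : (interior J).Nonempty := by
    refine ⟨(a + b) / 2, ?_⟩
    have hsub : Set.Ioo a b ⊆ J := fun x hx => hJ.out ha hb ⟨hx.1.le, hx.2.le⟩
    have : Set.Ioo a b ⊆ interior J := isOpen_Ioo.subset_interior_iff.2 hsub
    exact this ⟨by linarith, by linarith⟩
  have hUD : UniqueDiffOn ℝ J := uniqueDiffOn_convex hconv hint
  -- λ₁ = λ₂ on J
  have heq : ∀ t ∈ J, lam₁ t = lam₂ t := by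
    intro t ht
    have h0 : HasDerivWithinAt lam₃ 0 J t :=
      (hasDerivWithinAt_const t J (0 : ℝ)).congr hswitch (hswitch t ht)
    have huniq := (hlam₃ t ht).derivWithin (hUD t ht)
    rw [h0.derivWithin (hUD t ht)] at huniq
    have hβS : β t * S t ≠ 0 := mul_ne_zero (hβpos t ht).ne' (hSne t ht)
    rw [hswitch t ht, mul_zero, add_zero] at huniq
    have : β t * S t * (lam₁ t - lam₂ t) = 0 := by linarith [huniq]; 
    have := (mul_eq_zero.1 this).resolve_left hβS
    linarith
  intro t ht
  -- λ₂ has derivative 0 within J (since λ₂ = λ₁ on J and λ₁' = 0)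
  have h1 : HasDerivWithinAt lam₁ 0 J t := by
    have := hlam₁ t ht
    rwa [heq t ht, sub_self] at this
  have h2 : HasDerivWithinAt lam₂ 0 J t :=
    h1.congr (fun x hx => (heq x hx).symm) (heq t ht).symm
  have h3 := (hlam₂ t ht).derivWithin (hUD t ht)
  rw [h2.derivWithin (hUD t ht), hswitch t ht] at h3
  have hl2 : lam₂ t = 0 := by
    have : η * lam₂ t = 0 := by linarith
    exact (mul_eq_zero.1 this).resolve_left hη.ne'
  exact ⟨(heq t ht).trans hl2, hl2, hswitch t ht⟩
end

section
/- (Tangential approach of the admissible-set barrier of the perfect SIR model.) Let γ > 0, β_min > 0 and I_max > 0. Suppose S, I : ℝ → ℝ are differentiable on a neighbourhood of t̄ and satisfy S'(t) = −β_min S(t) I(t) and I'(t) = β_min S(t) I(t) − γ I(t) there, with I(t̄) = I_max and S(t̄) = γ / β_min. Then there exists ε > 0 such that I(t) < I_max for all t ∈ (t̄ − ε, t̄); i.e. the barrier curve reaching the ultimate tangent point (γ/β_min, I_max) with the input β ≡ β_min lies in the open region {I < I_max} immediately before the tangency time. -/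
/-- Tangential approach of the admissible-set barrier of the perfect SIR model:
the barrier curve reaching the ultimate tangent point `(γ/β_min, I_max)` with
input `β ≡ β_min` satisfies `I(t) < I_max` immediately before the tangency time. -/
theorem sir_admissible_barrier_tangential_approach
    (γ βmin Imax tbar : ℝ)
    (hγ : 0 < γ) (hβmin : 0 < βmin) (hImax : 0 < Imax)
    (S I : ℝ → ℝ)
    (hS : ∀ᶠ t in nhds tbar, HasDerivAt S (-(βmin * S t * I t)) t)
    (hI : ∀ᶠ t in nhds tbar, HasDerivAt I (βmin * S t * I t - γ * I t) t)
    (hItan : I tbar = Imax) (hStan : S tbar = γ / βmin) :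
    ∃ ε > 0, ∀ t ∈ Set.Ioo (tbar - ε) tbar, I t < Imax := by
  -- continuity at tbar
  have hScont : ContinuousAt S tbar := hS.self_of_nhds.continuousAt
  have hIcont : ContinuousAt I tbar := hI.self_of_nhds.continuousAt
  have hSpos : ∀ᶠ t in nhds tbar, 0 < S t := by
    have : S tbar > 0 := by rw [hStan]; positivity
    exact continuousAt_const.eventually_lt hScont this
  have hIpos : ∀ᶠ t in nhds tbar, 0 < I t := by
    have : I tbar > 0 := by rw [hItan]; exact hImax
    exact continuousAt_const.eventually_lt hIcont this
  have hall := (hS.and hI).and (hSpos.and hIpos)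
  rw [Metric.eventually_nhds_iff] at hall
  obtain ⟨δ, hδ, hball⟩ := hall
  refine ⟨δ, hδ, fun t ht => ?_⟩
  obtain ⟨ht1, ht2⟩ := ht
  have hmem : ∀ x ∈ Set.Icc t tbar, dist x tbar < δ := by
    intro x hx
    rw [Real.dist_eq, abs_lt]
    constructor <;> [linarith [hx.1]; linarith [hx.2]]
  -- S is strictly decreasing on [t, tbar]
  have hSanti : StrictAntiOn S (Set.Icc t tbar) := by
    apply strictAntiOn_of_deriv_neg (convex_Icc t tbar)
    · intro x hx
      exact ((hball (hmem x hx)).1.1.continuousAt).continuousWithinAt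
    · intro x hx
      rw [interior_Icc] at hx
      have h := hball (hmem x ⟨hx.1.le, hx.2.le⟩)
      rw [h.1.1.deriv]
      have := mul_pos (mul_pos hβmin h.2.1) h.2.2
      linarith
  have hSgt : ∀ x ∈ Set.Ico t tbar, γ / βmin < S x := by
    intro x hx
    rw [← hStan]
    exact hSanti ⟨hx.1, hx.2.le⟩ ⟨ht2.le, le_refl _⟩ hx.2
  -- I is strictly increasing on [t, tbar]
  have hImono : StrictMonoOn I (Set.Icc t tbar) := by
    apply strictMonoOn_of_deriv_pos (convex_Icc t tbar)
    · intro x hx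
      exact ((hball (hmem x hx)).1.2.continuousAt).continuousWithinAt
    · intro x hx
      rw [interior_Icc] at hx
      have h := hball (hmem x ⟨hx.1.le, hx.2.le⟩)
      rw [h.1.2.deriv]
      have hSx := hSgt x ⟨hx.1.le, hx.2⟩
      have hIx := h.2.2
      have : γ < βmin * S x := by
        rw [div_lt_iff₀ hβmin] at hSx; linarith [hSx]
      nlinarith
  rw [← hItan]
  exact hImono ⟨le_refl _, ht2.le⟩ ⟨ht2.le, le_refl _⟩ ht2
end

section
/- (Tangential approach of the MRPI barrier of the perfect SIR model.) Let γ > 0, β_max > 0 and I_max > 0. Suppose S, I : ℝ → ℝ are differentiable on a neighbourhood of t̄ and satisfy S'(t) = −β_max S(t) I(t) and I'(t) = β_max S(t) I(t) − γ I(t) there, with I(t̄) = I_max and S(t̄) = γ / β_max. Then there exists ε > 0 such that I(t) < I_max for all t ∈ (t̄ − ε, t̄); i.e. the barrier curve reaching the ultimate tangent point (γ/β_max, I_max) with the input β ≡ β_max lies in the open region {I < I_max} immediately before the tangency time. -/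
/-!
Along the trajectory `I' = I (β_max S - γ)` vanishes at `t̄`, since `β_max S(t̄) = γ`, and its
derivative there is `β_max S' I = -β_max γ I_max² < 0`. Hence `I'` is positive just before `t̄`,
so `I` is strictly increasing on a left neighbourhood of `t̄` and stays below `I(t̄) = I_max`.
-/

open Filter Set Topology

theorem HasDerivAt.eventually_nhdsLT_lt_of_neg {g : ℝ → ℝ} {d a : ℝ} (hg : HasDerivAt g d a)
    (hd : d < 0) : ∀ᶠ t in 𝓝[<] a, g a < g t := by
  have hslope : ∀ᶠ t in 𝓝[<] a, slope g a t < 0 :=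
    nhdsLT_le_nhdsNE a <| (hasDerivAt_iff_tendsto_slope.mp hg).eventually (eventually_lt_nhds hd)
  filter_upwards [hslope, self_mem_nhdsWithin] with t hneg (ht : t < a)
  rw [slope_def_field, div_lt_iff_of_neg (sub_neg.2 ht)] at hneg
  linarith

theorem eventually_nhdsLT_lt_of_deriv_pos {f f' : ℝ → ℝ} {a : ℝ}
    (hf : ∀ᶠ t in 𝓝 a, HasDerivAt f (f' t) t) (hf' : ∀ᶠ t in 𝓝[<] a, 0 < f' t) :
    ∀ᶠ t in 𝓝[<] a, f t < f a := by
  obtain ⟨l₁, hl₁, hderiv⟩ := mem_nhdsLE_iff_exists_Ioc_subset.1 (nhdsWithin_le_nhds hf)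
  obtain ⟨l₂, hl₂, hpos⟩ := mem_nhdsLT_iff_exists_Ioo_subset.1 hf'
  set l := max l₁ l₂
  have hderiv' : ∀ t ∈ Ioc l a, HasDerivAt f (f' t) t := fun t ht =>
    hderiv ⟨(le_max_left _ _).trans_lt ht.1, ht.2⟩
  have hmono : StrictMonoOn f (Ioc l a) := by
    refine strictMonoOn_of_hasDerivWithinAt_pos (convex_Ioc l a)
      (fun t ht => (hderiv' t ht).continuousAt.continuousWithinAt) (f' := f') ?_ ?_ <;>
      rw [interior_Ioc] <;> intro t ht
    · exact (hderiv' t (Ioo_subset_Ioc_self ht)).hasDerivWithinAt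
    · exact hpos ⟨(le_max_right _ _).trans_lt ht.1, ht.2⟩
  filter_upwards [Ioo_mem_nhdsLT (max_lt hl₁ hl₂)] with t ht
  exact hmono (Ioo_subset_Ioc_self ht) ⟨max_lt hl₁ hl₂, le_rfl⟩ ht.2

theorem eventually_nhdsLT_lt_of_deriv_eq_zero_of_deriv_neg {f f' : ℝ → ℝ} {a d : ℝ}
    (hf : ∀ᶠ t in 𝓝 a, HasDerivAt f (f' t) t) (hf'a : f' a = 0) (hf' : HasDerivAt f' d a)
    (hd : d < 0) : ∀ᶠ t in 𝓝[<] a, f t < f a :=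
  eventually_nhdsLT_lt_of_deriv_pos hf (hf'a ▸ hf'.eventually_nhdsLT_lt_of_neg hd)

/-- Tangential approach of the MRPI barrier of the perfect SIR model:
the barrier curve reaching the ultimate tangent point `(γ/β_max, I_max)` with
input `β ≡ β_max` satisfies `I(t) < I_max` immediately before the tangency time. -/
theorem sir_mrpi_barrier_tangential_approach
    (γ βmax Imax tbar : ℝ)
    (hγ : 0 < γ) (hβmax : 0 < βmax) (hImax : 0 < Imax)
    (S I : ℝ → ℝ)
    (hS : ∀ᶠ t in nhds tbar, HasDerivAt S (-(βmax * S t * I t)) t)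
    (hI : ∀ᶠ t in nhds tbar, HasDerivAt I (βmax * S t * I t - γ * I t) t)
    (hItan : I tbar = Imax) (hStan : S tbar = γ / βmax) :
    ∃ ε > 0, ∀ t ∈ Set.Ioo (tbar - ε) tbar, I t < Imax := by
  have hβS : βmax * S tbar = γ := by rw [hStan]; field_simp
  have hI'_zero : βmax * S tbar * I tbar - γ * I tbar = 0 := by rw [hβS]; ring
  have hI'_deriv :
      HasDerivAt (fun t => βmax * S t * I t - γ * I t) (-(βmax * γ * Imax ^ 2)) tbar := by
    refine (((hS.self_of_nhds.const_mul βmax).mul hI.self_of_nhds).sub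
      (hI.self_of_nhds.const_mul γ)).congr_deriv ?_
    rw [hI'_zero, mul_neg, ← mul_assoc, hβS, hItan]
    ring
  have hlt := eventually_nhdsLT_lt_of_deriv_eq_zero_of_deriv_neg hI hI'_zero hI'_deriv
    (neg_neg_of_pos (by positivity))
  obtain ⟨l, hl, hsub⟩ := mem_nhdsLT_iff_exists_Ioo_subset.1 hlt
  refine ⟨tbar - l, sub_pos.2 hl, fun t ht => hItan ▸ hsub ?_⟩
  rwa [sub_sub_cancel] at ht
end

section
/- (Tangential approach of the admissible-set barrier of the perfect SEIR model.) Let η > 0, β_min > 0, γ_max > 0 and I_max > 0. Suppose S, E, I : ℝ → ℝ are differentiable on a neighbourhood of t̄ and satisfy S' = −β_min S I, E' = β_min S I − η E, I' = η E − γ_max I there, with I(t̄) = I_max, E(t̄) = (γ_max / η) I_max, and S(t̄) = z₁ where 0 ≤ z₁ and β_min z₁ < γ_max. Then there exists ε > 0 such that I(t) < I_max for all t ∈ (t̄ − ε, t̄); i.e. the barrier curve ending tangentially at such a point of the ultimate tangentiality set lies in the open region {I < I_max} immediately before the tangency time. -/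
/-!
At the tangency time `I' = η E - γ_max I` vanishes, and its derivative there is
`η I_max (β_min z₁ - γ_max) < 0`. Hence `I' > 0` just before `t̄`, so `I` increases
up to its value `I_max` at `t̄`.
-/

open Filter Set Topology

theorem HasDerivAt.eventually_nhdsLT_gt_of_neg {g : ℝ → ℝ} {g' a : ℝ}
    (hg : HasDerivAt g g' a) (hneg : g' < 0) : ∀ᶠ t in 𝓝[<] a, g a < g t := by
  filter_upwards [(hasDerivAt_iff_tendsto_slope_left_right.mp hg).1.eventually
    (eventually_lt_nhds hneg), self_mem_nhdsWithin] with t hslope (ht : t < a)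
  rwa [slope_comm, slope_neg_iff_of_le ht.le] at hslope

theorem exists_Ioo_lt_of_hasDerivAt_pos_nhdsLT {f f' : ℝ → ℝ} {a : ℝ}
    (hf : ∀ᶠ t in 𝓝 a, HasDerivAt f (f' t) t) (hpos : ∀ᶠ t in 𝓝[<] a, 0 < f' t) :
    ∃ l < a, ∀ t ∈ Ioo l a, f t < f a := by
  obtain ⟨l, hl, hsub⟩ :=
    mem_nhdsLT_iff_exists_Ioo_subset.mp ((hf.filter_mono nhdsWithin_le_nhds).and hpos)
  refine ⟨l, hl, fun t ht => ?_⟩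
  have hcont : ContinuousOn f (Icc t a) := fun x hx => by
    rcases hx.2.eq_or_lt with rfl | hxa
    · exact hf.self_of_nhds.continuousAt.continuousWithinAt
    · exact (hsub ⟨ht.1.trans_le hx.1, hxa⟩).1.continuousAt.continuousWithinAt
  obtain ⟨c, hc, hslope⟩ := exists_hasDerivAt_eq_slope f f' ht.2 hcont
    fun x hx => (hsub ⟨ht.1.trans hx.1, hx.2⟩).1
  have hc_pos : 0 < (f a - f t) / (a - t) := hslope ▸ (hsub ⟨ht.1.trans hc.1, hc.2⟩).2
  exact sub_pos.mp ((div_pos_iff_of_pos_right (sub_pos.mpr ht.2)).mp hc_pos)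

theorem seir_admissible_barrier_tangential_approach_general
    (η βmin γmax Imax tbar z₁ : ℝ)
    (hη : 0 < η) (hImax : 0 < Imax)
    (S E I : ℝ → ℝ)
    (hE : ∀ᶠ t in nhds tbar, HasDerivAt E (βmin * S t * I t - η * E t) t)
    (hI : ∀ᶠ t in nhds tbar, HasDerivAt I (η * E t - γmax * I t) t)
    (hItan : I tbar = Imax) (hEtan : E tbar = (γmax / η) * Imax)
    (hStan : S tbar = z₁) (hz₁ : βmin * z₁ < γmax) :
    ∃ ε > 0, ∀ t ∈ Set.Ioo (tbar - ε) tbar, I t < Imax := by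
  have hηE : η * E tbar = γmax * Imax := by
    rw [hEtan]
    field_simp
  have hI'_tan : η * E tbar - γmax * I tbar = 0 := by
    rw [hηE, hItan, sub_self]
  have hI'_deriv : HasDerivAt (fun t => η * E t - γmax * I t)
      (η * Imax * (βmin * z₁ - γmax)) tbar := by
    refine ((hE.self_of_nhds.const_mul η).sub (hI.self_of_nhds.const_mul γmax)).congr_deriv ?_
    rw [hItan, hStan]
    linear_combination (-(η + γmax)) * hηE
  have hI'_pos : ∀ᶠ t in 𝓝[<] tbar, 0 < η * E t - γmax * I t := by
    have hneg : η * Imax * (βmin * z₁ - γmax) < 0 :=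
      mul_neg_of_pos_of_neg (mul_pos hη hImax) (sub_neg.mpr hz₁)
    simpa only [hI'_tan] using hI'_deriv.eventually_nhdsLT_gt_of_neg hneg
  obtain ⟨l, hl, hI_lt⟩ := exists_Ioo_lt_of_hasDerivAt_pos_nhdsLT hI hI'_pos
  exact ⟨tbar - l, sub_pos.mpr hl, fun t ht => hItan ▸ hI_lt t ⟨by linarith [ht.1], ht.2⟩⟩

/-- Tangential approach of the admissible-set barrier of the perfect SEIR model:
a barrier curve ending tangentially at a point of the ultimate tangentiality set
with `E(t̄) = (γ_max/η) I_max`, `I(t̄) = I_max`, `S(t̄) = z₁`, `0 ≤ z₁`,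
`β_min z₁ < γ_max` (inputs `β ≡ β_min`, `γ ≡ γ_max`) satisfies `I(t) < I_max`
immediately before the tangency time. -/
theorem seir_admissible_barrier_tangential_approach
    (η βmin γmax Imax tbar z₁ : ℝ)
    (hη : 0 < η) (hβmin : 0 < βmin) (hγmax : 0 < γmax) (hImax : 0 < Imax)
    (S E I : ℝ → ℝ)
    (hS : ∀ᶠ t in nhds tbar, HasDerivAt S (-(βmin * S t * I t)) t)
    (hE : ∀ᶠ t in nhds tbar, HasDerivAt E (βmin * S t * I t - η * E t) t)
    (hI : ∀ᶠ t in nhds tbar, HasDerivAt I (η * E t - γmax * I t) t)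
    (hItan : I tbar = Imax) (hEtan : E tbar = (γmax / η) * Imax)
    (hStan : S tbar = z₁) (hz₁0 : 0 ≤ z₁) (hz₁ : βmin * z₁ < γmax) :
    ∃ ε > 0, ∀ t ∈ Set.Ioo (tbar - ε) tbar, I t < Imax :=
  seir_admissible_barrier_tangential_approach_general η βmin γmax Imax tbar z₁ hη hImax S E I hE hI
    hItan hEtan hStan hz₁
end

section
/- (Tangential approach of the MRPI barrier of the perfect SEIR model.) Let η > 0, β_max > 0, γ_min > 0 and I_max > 0. Suppose S, E, I : ℝ → ℝ are differentiable on a neighbourhood of t̄ and satisfy S' = −β_max S I, E' = β_max S I − η E, I' = η E − γ_min I there, with I(t̄) = I_max, E(t̄) = (γ_min / η) I_max, and S(t̄) = z₁ where 0 ≤ z₁ and β_max z₁ < γ_min. Then there exists ε > 0 such that I(t) < I_max for all t ∈ (t̄ − ε, t̄); i.e. the barrier curve ending tangentially at such a point of the ultimate tangentiality set lies in the open region {I < I_max} immediately before the tangency time. -/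
/-- Tangential approach of the MRPI barrier of the perfect SEIR model:
a barrier curve ending tangentially at a point of the ultimate tangentiality set
with `E(t̄) = (γ_min/η) I_max`, `I(t̄) = I_max`, `S(t̄) = z₁`, `0 ≤ z₁`,
`β_max z₁ < γ_min` (inputs `β ≡ β_max`, `γ ≡ γ_min`) satisfies `I(t) < I_max`
immediately before the tangency time. -/
theorem seir_mrpi_barrier_tangential_approach
    (η βmax γmin Imax tbar z₁ : ℝ)
    (hη : 0 < η) (hβmax : 0 < βmax) (hγmin : 0 < γmin) (hImax : 0 < Imax)
    (S E I : ℝ → ℝ)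
    (hS : ∀ᶠ t in nhds tbar, HasDerivAt S (-(βmax * S t * I t)) t)
    (hE : ∀ᶠ t in nhds tbar, HasDerivAt E (βmax * S t * I t - η * E t) t)
    (hI : ∀ᶠ t in nhds tbar, HasDerivAt I (η * E t - γmin * I t) t)
    (hItan : I tbar = Imax) (hEtan : E tbar = (γmin / η) * Imax)
    (hStan : S tbar = z₁) (hz₁0 : 0 ≤ z₁) (hz₁ : βmax * z₁ < γmin) :
    ∃ ε > 0, ∀ t ∈ Set.Ioo (tbar - ε) tbar, I t < Imax := by
  set f : ℝ → ℝ := fun t => η * E t - γmin * I t with hfdef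
  have hfI : ∀ᶠ t in nhds tbar, HasDerivAt I (f t) t := hI
  have hItbar : HasDerivAt I (f tbar) tbar := hfI.self_of_nhds
  -- derivative of f at tbar
  have hf' : HasDerivAt f
      (η * (βmax * S tbar * I tbar - η * E tbar) - γmin * (η * E tbar - γmin * I tbar)) tbar :=
    ((hE.self_of_nhds).const_mul η).sub ((hI.self_of_nhds).const_mul γmin)
  have hηγ : η * ((γmin / η) * Imax) = γmin * Imax := by
    field_simp
  have hftbar : f tbar = 0 := by
    simp only [hfdef, hItan, hEtan]
    rw [hηγ]; ring
  have hcneg : η * (βmax * S tbar * I tbar - η * E tbar)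
      - γmin * (η * E tbar - γmin * I tbar) < 0 := by
    rw [hItan, hEtan, hStan, mul_sub, hηγ]
    nlinarith [mul_pos hη hImax]
  -- slope of f tends to a negative limit
  have hslope := hasDerivAt_iff_tendsto_slope.mp hf'
  have hslope_neg : ∀ᶠ t in nhdsWithin tbar {tbar}ᶜ, slope f tbar t < 0 :=
    hslope.eventually_lt_const hcneg
  have hcomb : ∀ᶠ t in nhdsWithin tbar {tbar}ᶜ,
      HasDerivAt I (f t) t ∧ slope f tbar t < 0 :=
    (hfI.filter_mono nhdsWithin_le_nhds).and hslope_neg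
  rw [eventually_nhdsWithin_iff, Metric.eventually_nhds_iff] at hcomb
  obtain ⟨ε, hε, hP'⟩ := hcomb
  have hP : ∀ {u : ℝ}, dist u tbar < ε → u ≠ tbar →
      HasDerivAt I (f u) u ∧ slope f tbar u < 0 := fun hd hne => hP' hd hne
  refine ⟨ε, hε, fun t ht => ?_⟩
  obtain ⟨ht1, ht2⟩ := ht
  -- every point of Icc t tbar is within ε of tbar
  have hmem : ∀ u ∈ Set.Icc t tbar, dist u tbar < ε := by
    intro u hu
    rw [Real.dist_eq, abs_lt]
    constructor <;> nlinarith [hu.1, hu.2]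
  have hderiv : ∀ u ∈ Set.Icc t tbar, HasDerivAt I (f u) u := by
    intro u hu
    by_cases h : u = tbar
    · rw [h]; exact hItbar
    · exact (hP (hmem u hu) h).1
  have hcont : ContinuousOn I (Set.Icc t tbar) := fun u hu =>
    (hderiv u hu).continuousAt.continuousWithinAt
  obtain ⟨c, hc, hceq⟩ := exists_hasDerivAt_eq_slope I f ht2 hcont
    (fun u hu => hderiv u ⟨le_of_lt hu.1, le_of_lt hu.2⟩)
  -- f c > 0 since slope f tbar c < 0 and c < tbar, f tbar = 0
  have hcε : dist c tbar < ε := hmem c ⟨le_of_lt hc.1, le_of_lt hc.2⟩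
  have hsc : slope f tbar c < 0 := (hP hcε (ne_of_lt hc.2)).2
  have hfc : 0 < f c := by
    rw [slope_def_field, hftbar] at hsc
    have := div_neg_iff.mp hsc
    rcases this with ⟨h1, h2⟩ | ⟨h1, h2⟩
    · linarith [hc.1, hc.2]
    · linarith [hc.1, hc.2]
  rw [hceq] at hfc
  have : 0 < I tbar - I t := by
    have htlt : 0 < tbar - t := by linarith [hc.1, hc.2]
    have := (div_pos_iff.mp hfc)
    rcases this with ⟨h1, _⟩ | ⟨_, h2⟩
    · linarith
    · linarith
  linarith [hItan ▸ this]
end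

section
/- (Sign of the SEIR switching function near ultimate tangentiality.) Let η > 0 and let β, I : ℝ → ℝ be functions. Suppose λ₁, λ₂, λ₃ : ℝ → ℝ are differentiable at t̄, satisfy λ₂'(t̄) = η λ₂(t̄) − η λ₃(t̄) and λ₁'(t̄) = β(t̄) I(t̄) λ₁(t̄) − β(t̄) I(t̄) λ₂(t̄), and the terminal condition (λ₁(t̄), λ₂(t̄), λ₃(t̄)) = (0, 0, 1). Then (λ₂ − λ₁)'(t̄) = −η < 0 and (λ₂ − λ₁)(t̄) = 0, and consequently there exists ε > 0 such that λ₂(t) − λ₁(t) > 0 for all t ∈ (t̄ − ε, t̄); hence the barrier input satisfies β̄(t) = β_min on an interval immediately before the tangency time. -/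
open Filter Set Topology

/- At the tangency time the terminal condition (0, 0, 1) turns the adjoint equations into
(λ₂ − λ₁)'(t̄) = −η < 0, while λ₂ − λ₁ vanishes at t̄; a function with negative derivative
lies above its value at t̄ just to the left of t̄, so λ₂ − λ₁ > 0 there and β̄ = β_min. -/

theorem HasDerivAt.eventually_gt_nhdsLT_of_neg {f : ℝ → ℝ} {f' x : ℝ} (hf : HasDerivAt f f' x)
    (hf' : f' < 0) : ∀ᶠ t in 𝓝[<] x, f x < f t := by
  filter_upwards [(hasDerivAt_iff_tendsto_slope_left_right.mp hf).1.eventually_lt_const hf',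
    self_mem_nhdsWithin] with t hslope (ht : t < x)
  rw [slope_def_field] at hslope
  have hprod : 0 < (f t - f x) / (t - x) * (t - x) := mul_pos_of_neg_of_neg hslope (sub_neg.mpr ht)
  rw [div_mul_cancel₀ _ (sub_ne_zero.mpr ht.ne)] at hprod
  linarith

theorem Filter.Eventually.exists_forall_Ioo_sub_of_nhdsLT {p : ℝ → Prop} {x : ℝ}
    (h : ∀ᶠ t in 𝓝[<] x, p t) : ∃ ε > 0, ∀ t ∈ Ioo (x - ε) x, p t := by
  obtain ⟨l, hl, hsub⟩ := mem_nhdsLT_iff_exists_Ioo_subset.mp h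
  exact ⟨x - l, sub_pos.mpr hl, fun t ht => hsub (by rwa [sub_sub_cancel] at ht)⟩

/-- Sign of the SEIR switching function near ultimate tangentiality: with the
terminal condition `(lam₁, lam₂, lam₃)(t̄) = (0, 0, 1)`, the switching function
`lam₂ − lam₁` vanishes at `t̄` with derivative `−η < 0`, hence is positive on an
interval immediately before `t̄`; consequently the barrier input `β̄` (which
equals `β_min` whenever `lam₂ − lam₁ > 0`) equals `β_min` there. -/
theorem seir_switching_function_sign_near_tangency
    (η βmin tbar : ℝ) (hη : 0 < η)
    (β I lam₁ lam₂ lam₃ betaBar : ℝ → ℝ)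
    (hlam₂ : HasDerivAt lam₂ (η * lam₂ tbar - η * lam₃ tbar) tbar)
    (hlam₁ : HasDerivAt lam₁
      (β tbar * I tbar * lam₁ tbar - β tbar * I tbar * lam₂ tbar) tbar)
    (hterm : lam₁ tbar = 0 ∧ lam₂ tbar = 0 ∧ lam₃ tbar = 1)
    (hbar : ∀ t, 0 < lam₂ t - lam₁ t → betaBar t = βmin) :
    HasDerivAt (fun t => lam₂ t - lam₁ t) (-η) tbar ∧
    lam₂ tbar - lam₁ tbar = 0 ∧
    ∃ ε > 0, ∀ t ∈ Set.Ioo (tbar - ε) tbar,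
      0 < lam₂ t - lam₁ t ∧ betaBar t = βmin := by
  obtain ⟨h₁, h₂, h₃⟩ := hterm
  have hderiv : HasDerivAt (fun t => lam₂ t - lam₁ t) (-η) tbar :=
    (hlam₂.sub hlam₁).congr_deriv (by rw [h₁, h₂, h₃]; ring)
  have hzero : lam₂ tbar - lam₁ tbar = 0 := by rw [h₁, h₂, sub_zero]
  obtain ⟨ε, hε, hpos⟩ :=
    (hderiv.eventually_gt_nhdsLT_of_neg (neg_neg_of_pos hη)).exists_forall_Ioo_sub_of_nhdsLT
  refine ⟨hderiv, hzero, ε, hε, fun t ht => ?_⟩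
  have hswitch : 0 < lam₂ t - lam₁ t := hzero ▸ hpos t ht
  exact ⟨hswitch, hbar t hswitch⟩
end
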